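/- arXiv:0902.1813 — 8 statements merged into one kernel-verified Lean document; each statement's English description precedes it below -/
import Mathlib

section
/- For all integers n > 1, a ≥ 2, and p ≥ 2, we have Σ_{k ∣ n} μ(n/k)·a^{pk} > p · Σ_{k ∣ n} μ(n/k)·a^k, where μ is the Möbius function. -/
open scoped BigOperators

private lemma aux_two_pow (p : ℕ) (hp : 2 ≤ p) : (p : ℤ) + 2 ≤ 2 ^ p := by
  induction p with
  | zero => omega
  | succ q ih =>
    rcases Nat.lt_or_ge q 2 with hq | hq
    · have hq1 : q = 1 := by omega
      subst hq1; norm_num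
    · have := ih hq
      have : (2:ℤ) ^ q ≥ 4 := by
        calc (4:ℤ) = 2^2 := by norm_num
        _ ≤ 2^q := pow_le_pow_right₀ (by norm_num) hq
      push_cast
      rw [pow_succ]
      nlinarith [ih hq]

private lemma aux_four_pow (p : ℕ) (hp : 2 ≤ p) : (p : ℤ) < 4 ^ (p - 1) := by
  induction p with
  | zero => omega
  | succ q ih =>
    rcases Nat.lt_or_ge q 2 with hq | hq
    · have hq1 : q = 1 := by omega
      subst hq1; norm_num
    · have h := ih hq
      have : (4:ℤ) ^ (q + 1 - 1) = 4 ^ (q - 1) * 4 := by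
        rw [show q + 1 - 1 = (q - 1) + 1 by omega, pow_succ]
      rw [this]
      push_cast
      nlinarith

private lemma geom_bound (x : ℤ) (hx : 2 ≤ x) (m : ℕ) :
    ∑ k ∈ Finset.Icc 1 m, x ^ k ≤ 2 * x ^ m - 2 := by
  induction m with
  | zero => simp
  | succ q ih =>
    rw [Finset.sum_Icc_succ_top (by omega)]
    have hxq : (0:ℤ) < x ^ q := pow_pos (by omega) q
    have h2 : 2 * x ^ q ≤ x ^ (q + 1) := by
      rw [pow_succ]
      nlinarith
    rw [pow_succ]
    nlinarith

private lemma proper_abs (n : ℕ) (hn : 1 < n) (x : ℤ) (hx : 2 ≤ x) :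
    |∑ k ∈ n.properDivisors, (ArithmeticFunction.moebius (n / k) : ℤ) * x ^ k| ≤
      2 * x ^ (n / 2) := by
  have hsub : n.properDivisors ⊆ Finset.Icc 1 (n / 2) := by
    intro k hk
    rw [Nat.mem_properDivisors] at hk
    obtain ⟨⟨c, hc⟩, hkn⟩ := hk
    have hk0 : 0 < k := by
      rcases Nat.eq_zero_or_pos k with h | h
      · subst h; simp at hc; omega
      · exact h
    have hc2 : 2 ≤ c := by
      rcases Nat.lt_or_ge c 2 with h | h
      · interval_cases c <;> omega
      · exact h
    rw [Finset.mem_Icc]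
    constructor
    · omega
    · rw [Nat.le_div_iff_mul_le (by norm_num)]
      calc k * 2 ≤ k * c := Nat.mul_le_mul_left k hc2
      _ = n := hc.symm
  calc |∑ k ∈ n.properDivisors, (ArithmeticFunction.moebius (n / k) : ℤ) * x ^ k|
      ≤ ∑ k ∈ n.properDivisors, |(ArithmeticFunction.moebius (n / k) : ℤ) * x ^ k| :=
        Finset.abs_sum_le_sum_abs _ _
    _ ≤ ∑ k ∈ n.properDivisors, x ^ k := by
        apply Finset.sum_le_sum
        intro k hk
        rw [abs_mul, abs_pow, abs_of_nonneg (by omega : (0:ℤ) ≤ x)]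
        have hμ : |(ArithmeticFunction.moebius (n / k) : ℤ)| ≤ 1 :=
          ArithmeticFunction.abs_moebius_le_one
        have hxp : (0:ℤ) ≤ x ^ k := pow_nonneg (by omega) k
        nlinarith
    _ ≤ ∑ k ∈ Finset.Icc 1 (n / 2), x ^ k := by
        apply Finset.sum_le_sum_of_subset_of_nonneg hsub
        intro k _ _
        exact pow_nonneg (by omega) k
    _ ≤ 2 * x ^ (n / 2) - 2 := geom_bound x hx _
    _ ≤ 2 * x ^ (n / 2) := by omega

private lemma sum_split (n : ℕ) (hn : 0 < n) (x : ℤ) :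
    ∑ k ∈ n.divisors, (ArithmeticFunction.moebius (n / k) : ℤ) * x ^ k =
      (∑ k ∈ n.properDivisors, (ArithmeticFunction.moebius (n / k) : ℤ) * x ^ k) + x ^ n := by
  rw [← Nat.cons_self_properDivisors hn.ne', Finset.sum_cons, Nat.div_self hn]
  simp [add_comm]

/-- For all integers `n > 1`, `a ≥ 2`, `p ≥ 2`:
`∑_{k ∣ n} μ(n/k)·a^{pk} > p · ∑_{k ∣ n} μ(n/k)·a^k`. -/
theorem moebius_sum_pow_lt (n p : ℕ) (a : ℤ) (hn : 1 < n) (ha : 2 ≤ a) (hp : 2 ≤ p) :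
    (p : ℤ) * ∑ k ∈ n.divisors, (ArithmeticFunction.moebius (n / k)) * a ^ k <
      ∑ k ∈ n.divisors, (ArithmeticFunction.moebius (n / k)) * a ^ (p * k) := by
  have hn0 : 0 < n := by omega
  have hb : (2:ℤ) ≤ a ^ p := le_trans (by norm_num : (2:ℤ) ≤ 2^2)
    (le_trans (pow_le_pow_right₀ (by norm_num) hp) (pow_le_pow_left₀ (by norm_num) ha p))
  -- rewrite RHS with base a^p
  have hrw : ∀ k : ℕ, a ^ (p * k) = (a ^ p) ^ k := fun k => by rw [← pow_mul]
  simp_rw [hrw]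
  rw [sum_split n hn0 a, sum_split n hn0 (a ^ p)]
  set Ea := ∑ k ∈ n.properDivisors, (ArithmeticFunction.moebius (n / k) : ℤ) * a ^ k with hEa
  set Eb := ∑ k ∈ n.properDivisors, (ArithmeticFunction.moebius (n / k) : ℤ) * (a ^ p) ^ k
  rcases Nat.lt_or_ge n 3 with h3 | h3
  · -- n = 2 case: Ea = -a, Eb = -(a^p)
    have hn2 : n = 2 := by omega
    subst hn2
    have hpd : Nat.properDivisors 2 = {1} := by decide
    have hEa' : Ea = -a := by
      simp [hEa, hpd, ArithmeticFunction.moebius_apply_prime Nat.prime_two]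
    have hEb' : Eb = -(a ^ p) := by
      simp [Eb, hpd, ArithmeticFunction.moebius_apply_prime Nat.prime_two]
    rw [hEa', hEb']
    have h1 : a ^ 2 ≤ a ^ p := pow_le_pow_right₀ (by omega) hp
    have h2 : (p : ℤ) + 2 ≤ a ^ p :=
      le_trans (aux_two_pow p hp) (pow_le_pow_left₀ (by norm_num) ha p)
    have hp0 : (0:ℤ) < p := by exact_mod_cast (by omega : 0 < p)
    nlinarith [sq_nonneg (a ^ p), pow_pos (by omega : (0:ℤ) < a) p]
  · -- n ≥ 3 case
    have ha0 : (0:ℤ) < a := by omega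
    have hm : n / 2 + 1 ≤ n - 1 := by omega
    -- |Ea| ≤ a^(n-1), |Eb| ≤ (a^p)^(n-1)
    have key : ∀ x : ℤ, 2 ≤ x →
        |∑ k ∈ n.properDivisors, (ArithmeticFunction.moebius (n / k) : ℤ) * x ^ k| ≤
          x ^ (n - 1) := by
      intro x hx
      refine le_trans (proper_abs n hn x hx) ?_
      have h1 : 2 * x ^ (n / 2) ≤ x ^ (n / 2 + 1) := by
        rw [pow_succ]
        nlinarith [pow_pos (by omega : (0:ℤ) < x) (n / 2)]
      exact le_trans h1 (pow_le_pow_right₀ (by omega) hm)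
    have hEa2 : Ea ≤ a ^ (n - 1) := le_trans (le_abs_self _) (key a ha)
    have hEb2 : -((a ^ p) ^ (n - 1)) ≤ Eb := by
      have := key (a ^ p) hb
      have := neg_abs_le (Eb)
      have h := abs_le.mp (key (a ^ p) hb)
      exact h.1
    -- key numeric inequality:
    -- p * (a^(n-1) + a^n) < (a^p)^n - (a^p)^(n-1)
    have hkey : (p : ℤ) * (a ^ (n - 1) + a ^ n) < (a ^ p) ^ n - (a ^ p) ^ (n - 1) := by
      have h4 : (p : ℤ) < 4 ^ (p - 1) := aux_four_pow p hp
      have hfour : (4:ℤ) ^ (p - 1) ≤ a ^ ((n - 1) * (p - 1)) := by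
        calc (4:ℤ) ^ (p - 1) = (2 ^ 2 : ℤ) ^ (p - 1) := by norm_num
        _ = 2 ^ (2 * (p - 1)) := by rw [← pow_mul]
        _ ≤ a ^ (2 * (p - 1)) := pow_le_pow_left₀ (by norm_num) ha _
        _ ≤ a ^ ((n - 1) * (p - 1)) := pow_le_pow_right₀ (by omega)
            (Nat.mul_le_mul_right _ (by omega))
      have hap : a + 1 ≤ a ^ p - 1 := by
        have : a ^ 2 ≤ a ^ p := pow_le_pow_right₀ (by omega) hp
        nlinarith
      have hstep : (p : ℤ) * (a + 1) < a ^ ((n - 1) * (p - 1)) * (a ^ p - 1) := by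
        have ha1 : (0:ℤ) < a + 1 := by omega
        calc (p : ℤ) * (a + 1) < 4 ^ (p - 1) * (a + 1) :=
              mul_lt_mul_of_pos_right h4 ha1
        _ ≤ a ^ ((n - 1) * (p - 1)) * (a ^ p - 1) := by
              apply mul_le_mul hfour hap (by omega)
              positivity
      have hpow : (0:ℤ) < a ^ (n - 1) := pow_pos ha0 _
      have := mul_lt_mul_of_pos_right hstep hpow
      have e1 : (n - 1) * (p - 1) + p + (n - 1) = p * n := by
        obtain ⟨n', rfl⟩ : ∃ n', n = n' + 1 := ⟨n - 1, by omega⟩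
        obtain ⟨p', rfl⟩ : ∃ p', p = p' + 1 := ⟨p - 1, by omega⟩
        simp only [Nat.add_sub_cancel]
        ring
      have e2 : (n - 1) * (p - 1) + (n - 1) = p * (n - 1) := by
        obtain ⟨p', rfl⟩ : ∃ p', p = p' + 1 := ⟨p - 1, by omega⟩
        simp only [Nat.add_sub_cancel]
        ring
      calc (p : ℤ) * (a ^ (n - 1) + a ^ n)
          = (p : ℤ) * (a + 1) * a ^ (n - 1) := by
            have han : a ^ n = a ^ (n - 1) * a := by
              rw [← pow_succ]
              congr 1
              omega
            rw [han]; ring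
        _ < a ^ ((n - 1) * (p - 1)) * (a ^ p - 1) * a ^ (n - 1) := this
        _ = a ^ ((n - 1) * (p - 1) + p + (n - 1)) - a ^ ((n - 1) * (p - 1) + (n - 1)) := by
            rw [pow_add, pow_add, pow_add]; ring
        _ = (a ^ p) ^ n - (a ^ p) ^ (n - 1) := by
            rw [e1, e2, pow_mul, pow_mul]
    have hEapos : Ea + a ^ n ≤ a ^ (n - 1) + a ^ n := by linarith
    have hp0 : (0:ℤ) < p := by positivity
    calc (p : ℤ) * (Ea + a ^ n) ≤ (p : ℤ) * (a ^ (n - 1) + a ^ n) :=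
          mul_le_mul_of_nonneg_left hEapos (le_of_lt hp0)
    _ < (a ^ p) ^ n - (a ^ p) ^ (n - 1) := hkey
    _ ≤ Eb + (a ^ p) ^ n := by linarith
end

section
/- Let φ(z) = z^d with d ≥ 2 and N > 1. Then the N-th dynatomic polynomial Φ*_N(z) = ∏_{k ∣ N} (z^{d^k} − z)^{μ(N/k)} equals the product of the cyclotomic polynomials C_k(z) over all k dividing d^N − 1 such that k does not divide d^m − 1 for any proper divisor m of N. -/
open scoped BigOperators
open Polynomial Finset

private lemma dvd_pow_sub_one_iff {d : ℕ} (hd : 2 ≤ d) (j m : ℕ) :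
    j ∣ d ^ m - 1 ↔ orderOf (d : ZMod j) ∣ m := by
  have h1 : 1 ≤ d ^ m := Nat.one_le_pow _ _ (by omega)
  rw [orderOf_dvd_iff_pow_eq_one, ← Nat.cast_pow,
    ← ZMod.natCast_eq_zero_iff, Nat.cast_sub h1, Nat.cast_one, sub_eq_zero,
    eq_comm]

private lemma mem_S_iff {d : ℕ} (hd : 2 ≤ d) {n : ℕ} (hn : 0 < n) (j : ℕ) :
    j ∈ (d ^ n - 1).divisors.filter
        (fun k => ∀ m ∈ n.properDivisors, ¬ k ∣ d ^ m - 1) ↔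
      0 < j ∧ orderOf (d : ZMod j) = n := by
  simp only [Finset.mem_filter, Nat.mem_divisors, Nat.mem_properDivisors]
  constructor
  · rintro ⟨⟨hdvd, -⟩, hmin⟩
    have hjpos : 0 < j := Nat.pos_of_dvd_of_pos hdvd
      (by have : 2 ≤ d ^ n := le_trans hd (Nat.le_self_pow hn.ne' d); omega)
    have hord : orderOf (d : ZMod j) ∣ n := (dvd_pow_sub_one_iff hd j n).mp hdvd
    refine ⟨hjpos, ?_⟩
    by_contra hne
    have hlt : orderOf (d : ZMod j) < n :=
      lt_of_le_of_ne (Nat.le_of_dvd hn hord) hne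
    exact hmin _ ⟨hord, hlt⟩ ((dvd_pow_sub_one_iff hd j _).mpr dvd_rfl)
  · rintro ⟨hjpos, rfl⟩
    refine ⟨⟨(dvd_pow_sub_one_iff hd j _).mpr dvd_rfl, ?_⟩, ?_⟩
    · have : 2 ≤ d ^ orderOf (d : ZMod j) := le_trans hd (Nat.le_self_pow hn.ne' d)
      omega
    · rintro m ⟨hmdvd, hmlt⟩ hdm
      have := (dvd_pow_sub_one_iff hd j m).mp hdm
      have hm : 0 < m := Nat.pos_of_dvd_of_pos hmdvd hn
      exact absurd (Nat.le_of_dvd hm this) (by omega)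

private lemma divisors_partition {d : ℕ} (hd : 2 ≤ d) {k : ℕ} (hk : 0 < k) :
    (d ^ k - 1).divisors = k.divisors.biUnion
      (fun n => (d ^ n - 1).divisors.filter
        (fun j => ∀ m ∈ n.properDivisors, ¬ j ∣ d ^ m - 1)) := by
  ext j
  simp only [Finset.mem_biUnion, Nat.mem_divisors]
  constructor
  · rintro ⟨hdvd, hne⟩
    have hjpos : 0 < j := Nat.pos_of_dvd_of_pos hdvd (Nat.pos_of_ne_zero hne)
    have hord : orderOf (d : ZMod j) ∣ k := (dvd_pow_sub_one_iff hd j k).mp hdvd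
    have hopos : 0 < orderOf (d : ZMod j) := by
      rcases Nat.eq_zero_or_pos (orderOf (d : ZMod j)) with h | h
      · rw [h] at hord; omega
      · exact h
    exact ⟨orderOf (d : ZMod j), ⟨hord, hk.ne'⟩,
      (mem_S_iff hd hopos j).mpr ⟨hjpos, rfl⟩⟩
  · rintro ⟨n, ⟨hnk, -⟩, hj⟩
    have hn : 0 < n := Nat.pos_of_dvd_of_pos hnk hk
    obtain ⟨hjpos, hord⟩ := (mem_S_iff hd hn j).mp hj
    refine ⟨(dvd_pow_sub_one_iff hd j k).mpr (hord ▸ hnk), ?_⟩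
    have : 2 ≤ d ^ k := le_trans hd (Nat.le_self_pow hk.ne' d)
    omega

/-- For `φ(z) = z^d`, `d ≥ 2`, `N > 1`, the `N`-th dynatomic polynomial
`Φ*_N(z) = ∏_{k ∣ N} (z^{d^k} − z)^{μ(N/k)}` equals the product of the cyclotomic
polynomials `C_k(z)` over all `k ∣ d^N − 1` such that `k ∤ d^m − 1` for every proper
divisor `m` of `N`. -/
theorem dynatomic_powerMap_eq_cyclotomic_prod (d N : ℕ) (hd : 2 ≤ d) (hN : 1 < N) :
    ∏ k ∈ N.divisors,
        (algebraMap (Polynomial ℚ) (RatFunc ℚ) (X ^ (d ^ k) - X)) ^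
          (ArithmeticFunction.moebius (N / k)) =
      algebraMap (Polynomial ℚ) (RatFunc ℚ)
        (∏ k ∈ (d ^ N - 1).divisors.filter
            (fun k => ∀ m ∈ N.properDivisors, ¬ k ∣ d ^ m - 1),
          Polynomial.cyclotomic k ℚ) := by
  set f := algebraMap (Polynomial ℚ) (RatFunc ℚ) with hf
  set S : ℕ → Finset ℕ := fun n => (d ^ n - 1).divisors.filter
    (fun j => ∀ m ∈ n.properDivisors, ¬ j ∣ d ^ m - 1) with hS
  set G : ℕ → RatFunc ℚ := fun n =>
    (if n = 1 then f X else 1) * ∏ j ∈ S n, f (cyclotomic j ℚ) with hG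
  set F : ℕ → RatFunc ℚ := fun n => f (X ^ (d ^ n) - X) with hF
  have hFne : ∀ n : ℕ, 0 < n → F n ≠ 0 := by
    intro n hn
    apply RatFunc.algebraMap_ne_zero
    intro h
    have h2 : ((X : Polynomial ℚ) ^ (d ^ n)).natDegree = (X : Polynomial ℚ).natDegree := by
      rw [sub_eq_zero.mp h]
    have hdn : 2 ≤ d ^ n := le_trans hd (Nat.le_self_pow hn.ne' d)
    simp [natDegree_X_pow, natDegree_X] at h2
    omega
  have hGne : ∀ n : ℕ, 0 < n → G n ≠ 0 := by
    intro n hn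
    refine mul_ne_zero ?_ ?_
    · split
      · exact RatFunc.algebraMap_ne_zero X_ne_zero
      · exact one_ne_zero
    · exact Finset.prod_ne_zero_iff.mpr fun j _ =>
        RatFunc.algebraMap_ne_zero (cyclotomic_ne_zero j ℚ)
  have key : ∀ n > 0, ∏ i ∈ n.divisors, G i = F n := by
    intro n hn
    have hdn : 2 ≤ d ^ n := le_trans hd (Nat.le_self_pow hn.ne' d)
    have hdisj : Set.PairwiseDisjoint (↑n.divisors) S := by
      intro a ha b hb hab
      have hapos : 0 < a := Nat.pos_of_mem_divisors ha
      have hbpos : 0 < b := Nat.pos_of_mem_divisors hb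
      refine Finset.disjoint_left.mpr fun j hja hjb => hab ?_
      have h1 := ((mem_S_iff hd hapos j).mp hja).2
      have h2 := ((mem_S_iff hd hbpos j).mp hjb).2
      omega
    rw [hG]
    rw [Finset.prod_mul_distrib, Finset.prod_ite_eq' n.divisors 1 (fun _ => f X)]
    rw [if_pos (Nat.one_mem_divisors.mpr hn.ne'), ← Finset.prod_biUnion hdisj,
      ← divisors_partition hd hn, ← map_prod, prod_cyclotomic_eq_X_pow_sub_one (by omega) ℚ,
      ← map_mul]
    congr 1
    have h1 : d ^ n = (d ^ n - 1) + 1 := by omega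
    generalize hA : d ^ n - 1 = a at h1 ⊢
    rw [h1, pow_succ]
    ring
  have hinv := (ArithmeticFunction.prod_eq_iff_prod_pow_moebius_eq_of_nonzero
    hGne hFne).mp key N (by omega)
  rw [Nat.prod_divisorsAntidiagonal' (fun a b => F b ^ ArithmeticFunction.moebius a)] at hinv
  calc ∏ k ∈ N.divisors, f (X ^ (d ^ k) - X) ^ (ArithmeticFunction.moebius (N / k))
      = G N := hinv
    _ = f (∏ k ∈ S N, cyclotomic k ℚ) := by
        simp only [hG]
        rw [if_neg (by omega : ¬ N = 1), one_mul, map_prod]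
end

section
/- Let d ≥ 2 and N > 2 with N odd, and let φ(z) = 1/z^d. Then the N-th dynatomic polynomial for φ equals ∏ C_k(z), the product over all k dividing d^N + 1 such that k does not divide d^m + 1 for any proper divisor m of N. -/
open scoped BigOperators
open Polynomial

section Helpers

open Finset ArithmeticFunction

/-- `k ∣ d^e + 1` iff `d^e = -1` in `ZMod k`. -/
private lemma dvd_iff_zmod {k d e : ℕ} : k ∣ d ^ e + 1 ↔ (d : ZMod k) ^ e = -1 := by
  rw [← ZMod.natCast_eq_zero_iff]
  push_cast
  rw [add_eq_zero_iff_eq_neg]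

/-- If `k ∣ d^a + 1`, `a ∣ b` and `b` odd, then `k ∣ d^b + 1`. -/
private lemma dvd_step {k d a b : ℕ} (h : k ∣ d ^ a + 1) (hab : a ∣ b) (hb : Odd b) :
    k ∣ d ^ b + 1 := by
  rw [dvd_iff_zmod] at h ⊢
  obtain ⟨c, rfl⟩ := hab
  have hc : Odd c := (Nat.odd_mul.mp hb).2
  rw [pow_mul, h]
  exact hc.neg_one_pow

private lemma odd_of_dvd {m n : ℕ} (h : m ∣ n) (hn : Odd n) : Odd m := by
  rcases Nat.even_or_odd m with he | ho
  · exact absurd (even_iff_two_dvd.2 (he.two_dvd.trans h)) (Nat.not_even_iff_odd.2 hn)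
  · exact ho

private lemma odd_pow_sq_eq {M : Type*} [Monoid M] {y : M} (h : y ^ 2 = 1) {c : ℕ}
    (hc : Odd c) : y ^ c = y := by
  obtain ⟨m, rfl⟩ := hc
  rw [pow_add, pow_mul, h, one_pow, one_mul, pow_one]

/-- gcd closure: if `k ∣ d^a+1` and `k ∣ d^b+1` with `a`, `b` odd, then
`k ∣ d^(gcd a b) + 1`. -/
private lemma dvd_gcd_step {k d a b : ℕ} (ha : k ∣ d ^ a + 1) (hb : k ∣ d ^ b + 1)
    (hao : Odd a) (hbo : Odd b) : k ∣ d ^ Nat.gcd a b + 1 := by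
  rw [dvd_iff_zmod] at ha hb ⊢
  set x : ZMod k := (d : ZMod k) with hx
  have h2a : x ^ (2 * a) = 1 := by rw [mul_comm, pow_mul, ha]; ring
  have h2b : x ^ (2 * b) = 1 := by rw [mul_comm, pow_mul, hb]; ring
  have hord : orderOf x ∣ 2 * Nat.gcd a b := by
    rw [← Nat.gcd_mul_left]
    exact Nat.dvd_gcd (orderOf_dvd_of_pow_eq_one h2a) (orderOf_dvd_of_pow_eq_one h2b)
  have hsq : (x ^ Nat.gcd a b) ^ 2 = 1 := by
    rw [← pow_mul, mul_comm]
    exact orderOf_dvd_iff_pow_eq_one.mp hord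
  have hgdvd : Nat.gcd a b ∣ a := Nat.gcd_dvd_left a b
  obtain ⟨c, hc⟩ := hgdvd
  have hcodd : Odd c := by
    rcases Nat.even_or_odd c with h | h
    · exact absurd (hc ▸ h.mul_left _) (Nat.not_even_iff_odd.2 hao)
    · exact h
  have : (x ^ Nat.gcd a b) ^ c = x ^ Nat.gcd a b := odd_pow_sq_eq hsq hcodd
  rw [← pow_mul, ← hc, ha] at this
  exact this.symm

/-- gcd of a finset of odd numbers `e` with `k ∣ d^e+1` again has this property
(or is zero). -/
private lemma gcd_closure {k d : ℕ} (s : Finset ℕ)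
    (h : ∀ e ∈ s, Odd e ∧ k ∣ d ^ e + 1) :
    s.gcd _root_.id = 0 ∨ (Odd (s.gcd _root_.id) ∧ k ∣ d ^ (s.gcd _root_.id) + 1) := by
  classical
  induction s using Finset.induction_on with
  | empty => simp
  | @insert a s ha ih =>
    rw [Finset.gcd_insert]
    obtain ⟨hao, hak⟩ := h a (Finset.mem_insert_self a s)
    rcases ih (fun e he => h e (Finset.mem_insert_of_mem he)) with h0 | ⟨ho, hk'⟩
    · rw [h0]
      right
      simpa [Nat.gcd_zero_right] using ⟨hao, hak⟩
    · right
      exact ⟨odd_of_dvd (Nat.gcd_dvd_left _ _) hao, dvd_gcd_step hak hk' hao ho⟩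

/-- `a ^ (∑ f) = ∏ a ^ f` for nonzero `a` in a field (zpow version). -/
private lemma zpow_finset_sum {K : Type*} [Field K] {a : K} (ha : a ≠ 0)
    {ι : Type*} (s : Finset ι) (f : ι → ℤ) :
    a ^ (∑ i ∈ s, f i) = ∏ i ∈ s, a ^ f i := by
  classical
  induction s using Finset.induction_on with
  | empty => simp
  | insert _ _ hx ih => rw [Finset.sum_insert hx, Finset.prod_insert hx, zpow_add₀ ha, ih]

end Helpers

/-- For `φ(z) = 1/z^d`, `d ≥ 2`, and odd `N > 2`, the `N`-th dynatomic polynomial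
`∏_{k∣N, 2∤k} (z^{d^k+1} − 1)^{μ(N/k)} · ∏_{k∣N, 2∣k} (z^{d^k} − z)^{μ(N/k)}`
equals `∏ C_k(z)` over all `k ∣ d^N + 1` with `k ∤ d^m + 1` for every proper divisor
`m` of `N`. -/
theorem dynatomic_invPowerMap_odd_eq_cyclotomic_prod (d N : ℕ) (hd : 2 ≤ d)
    (hN : 2 < N) (hodd : Odd N) :
    (∏ k ∈ N.divisors.filter (fun k => ¬ 2 ∣ k),
        (algebraMap (Polynomial ℚ) (RatFunc ℚ) (X ^ (d ^ k + 1) - 1)) ^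
          (ArithmeticFunction.moebius (N / k))) *
      (∏ k ∈ N.divisors.filter (fun k => 2 ∣ k),
        (algebraMap (Polynomial ℚ) (RatFunc ℚ) (X ^ (d ^ k) - X)) ^
          (ArithmeticFunction.moebius (N / k))) =
      algebraMap (Polynomial ℚ) (RatFunc ℚ)
        (∏ k ∈ (d ^ N + 1).divisors.filter
            (fun k => ∀ m ∈ N.properDivisors, ¬ k ∣ d ^ m + 1),
          Polynomial.cyclotomic k ℚ) := by
  classical
  have hN0 : N ≠ 0 := by omega
  have hDpos : 0 < d ^ N + 1 := Nat.succ_le_succ (Nat.zero_le _)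
  have hD0 : d ^ N + 1 ≠ 0 := hDpos.ne'
  set D := (d ^ N + 1).divisors with hD
  set μ := ArithmeticFunction.moebius
  -- every divisor of N is odd
  have hodd_div : ∀ e ∈ N.divisors, Odd e := by
    intro e he
    rw [Nat.mem_divisors] at he
    exact odd_of_dvd he.1 hodd
  -- second product is empty
  have h2 : N.divisors.filter (fun k => 2 ∣ k) = ∅ := by
    rw [Finset.filter_eq_empty_iff]
    intro e he h2e
    exact (Nat.not_even_iff_odd.2 (hodd_div e he)) (even_iff_two_dvd.2 h2e)
  have h1 : N.divisors.filter (fun k => ¬ 2 ∣ k) = N.divisors := by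
    rw [Finset.filter_eq_self]
    intro e he h2e
    exact (Nat.not_even_iff_odd.2 (hodd_div e he)) (even_iff_two_dvd.2 h2e)
  rw [h1, h2, Finset.prod_empty, mul_one]
  -- every d^e+1 for e ∣ N divides d^N+1
  have hsub : ∀ e ∈ N.divisors, d ^ e + 1 ∣ d ^ N + 1 := by
    intro e he
    rw [Nat.mem_divisors] at he
    exact dvd_step dvd_rfl he.1 hodd
  set c : ℕ → RatFunc ℚ := fun k => algebraMap (Polynomial ℚ) (RatFunc ℚ) (cyclotomic k ℚ)
    with hc
  have hc0 : ∀ k, c k ≠ 0 := fun k =>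
    RatFunc.algebraMap_ne_zero (cyclotomic_ne_zero k ℚ)
  -- rewrite each factor as a product of cyclotomics
  have hfac : ∀ e ∈ N.divisors,
      (algebraMap (Polynomial ℚ) (RatFunc ℚ) (X ^ (d ^ e + 1) - 1)) ^ (μ (N / e))
        = ∏ k ∈ D.filter (· ∣ d ^ e + 1), c k ^ (μ (N / e)) := by
    intro e he
    rw [hD, Nat.divisors_filter_dvd_of_dvd hD0 (hsub e he),
      ← prod_cyclotomic_eq_X_pow_sub_one (Nat.succ_le_succ (Nat.zero_le _)) ℚ,
      map_prod, Finset.prod_zpow]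
  rw [Finset.prod_congr rfl hfac]
  -- swap the order of the products
  have hswap : (∏ e ∈ N.divisors, ∏ k ∈ D.filter (· ∣ d ^ e + 1), c k ^ (μ (N / e)))
      = ∏ k ∈ D, c k ^ (∑ e ∈ N.divisors.filter (fun e => k ∣ d ^ e + 1), μ (N / e)) := by
    simp_rw [Finset.prod_filter]
    rw [Finset.prod_comm]
    refine Finset.prod_congr rfl fun k _ => ?_
    rw [zpow_finset_sum (hc0 k), Finset.prod_filter]
  rw [hswap]
  -- compute the exponent for each k
  have hexp : ∀ k ∈ D,
      (∑ e ∈ N.divisors.filter (fun e => k ∣ d ^ e + 1), μ (N / e))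
        = if (∀ m ∈ N.properDivisors, ¬ k ∣ d ^ m + 1) then 1 else 0 := by
    intro k hk
    rw [hD, Nat.mem_divisors] at hk
    set S := N.divisors.filter (fun e => k ∣ d ^ e + 1) with hS
    have hNS : N ∈ S := by
      rw [hS, Finset.mem_filter, Nat.mem_divisors]
      exact ⟨⟨dvd_rfl, hN0⟩, hk.1⟩
    by_cases hgood : ∀ m ∈ N.properDivisors, ¬ k ∣ d ^ m + 1
    · rw [if_pos hgood]
      have : S = {N} := by
        ext e
        rw [hS, Finset.mem_filter, Finset.mem_singleton, Nat.mem_divisors]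
        constructor
        · rintro ⟨⟨heN, -⟩, hke⟩
          by_contra hne
          exact hgood e (Nat.mem_properDivisors.2
            ⟨heN, lt_of_le_of_ne (Nat.le_of_dvd (Nat.pos_of_ne_zero hN0) heN) hne⟩) hke
        · rintro rfl
          exact ⟨⟨dvd_rfl, hN0⟩, hk.1⟩
      rw [this, Finset.sum_singleton, Nat.div_self (Nat.pos_of_ne_zero hN0)]
      simp [μ]
    · rw [if_neg hgood]
      push_neg at hgood
      obtain ⟨m, hm, hkm⟩ := hgood
      rw [Nat.mem_properDivisors] at hm
      -- the gcd of all elements of S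
      set g := S.gcd id with hg
      have hP : ∀ e ∈ S, Odd e ∧ k ∣ d ^ e + 1 := by
        intro e he
        rw [hS, Finset.mem_filter] at he
        exact ⟨hodd_div e he.1, he.2⟩
      have hPg : g = 0 ∨ (Odd g ∧ k ∣ d ^ g + 1) := gcd_closure S hP
      have hgN : g ∣ N := Finset.gcd_dvd hNS
      have hg0 : g ≠ 0 := fun h => hN0 (Nat.eq_zero_of_zero_dvd (h ▸ hgN))
      obtain ⟨hgo, hgk⟩ := hPg.resolve_left hg0
      -- S is exactly the divisors of N that are multiples of g
      have hSeq : S = N.divisors.filter (fun e => g ∣ e) := by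
        ext e
        rw [hS, Finset.mem_filter, Finset.mem_filter]
        constructor
        · intro he
          exact ⟨he.1, Finset.gcd_dvd (by rw [hS, Finset.mem_filter]; exact he)⟩
        · rintro ⟨heN, hge⟩
          refine ⟨heN, dvd_step hgk hge (hodd_div e heN)⟩
      -- g < N
      have hmS : m ∈ S := by
        rw [hS, Finset.mem_filter, Nat.mem_divisors]
        exact ⟨⟨hm.1, hN0⟩, hkm⟩
      have hgm : g ∣ m := Finset.gcd_dvd hmS
      have hm0 : m ≠ 0 := by
        rintro rfl
        exact hN0 (Nat.eq_zero_of_zero_dvd hm.1)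
      have hgN' : g < N := lt_of_le_of_lt (Nat.le_of_dvd (Nat.pos_of_ne_zero hm0) hgm) hm.2
      -- reindex the sum
      have hNg0 : N / g ≠ 0 := Nat.div_ne_zero_iff_of_dvd hgN |>.2 ⟨hN0, hg0⟩
      have hreindex : (∑ e ∈ S, μ (N / e)) = ∑ j ∈ (N / g).divisors, μ j := by
        rw [hSeq]
        refine Finset.sum_nbij' (fun e => N / e) (fun j => N / j) ?_ ?_ ?_ ?_ ?_
        · intro e he
          rw [Finset.mem_filter, Nat.mem_divisors] at he
          obtain ⟨⟨heN, -⟩, hge⟩ := he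
          rw [Nat.mem_divisors]
          refine ⟨?_, hNg0⟩
          rw [Nat.dvd_div_iff_mul_dvd hgN]
          calc g * (N / e) ∣ e * (N / e) := mul_dvd_mul_right hge _
            _ = N := Nat.mul_div_cancel' heN
        · intro j hj
          rw [Nat.mem_divisors] at hj
          have hjN : j ∣ N := hj.1.trans (Nat.div_dvd_of_dvd hgN)
          rw [Finset.mem_filter, Nat.mem_divisors]
          refine ⟨⟨Nat.div_dvd_of_dvd hjN, hN0⟩, ?_⟩
          rw [Nat.dvd_div_iff_mul_dvd hjN]
          rw [Nat.dvd_div_iff_mul_dvd hgN] at hj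
          exact (mul_comm j g) ▸ hj.1
        · intro e he
          rw [Finset.mem_filter, Nat.mem_divisors] at he
          exact Nat.div_div_self he.1.1 hN0
        · intro j hj
          rw [Nat.mem_divisors] at hj
          exact Nat.div_div_self (hj.1.trans (Nat.div_dvd_of_dvd hgN)) hN0
        · intro e he
          rfl
      rw [hreindex]
      have := ArithmeticFunction.coe_mul_zeta_apply
        (f := (ArithmeticFunction.moebius : ArithmeticFunction ℤ)) (x := N / g)
      rw [ArithmeticFunction.moebius_mul_coe_zeta] at this
      rw [← this, ArithmeticFunction.one_apply_ne]
      intro h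
      have : N = g := by
        conv_lhs => rw [← Nat.div_mul_cancel hgN]
        rw [h, one_mul]
      exact absurd this.symm (ne_of_lt hgN')
  -- finish
  calc ∏ k ∈ D, c k ^ (∑ e ∈ N.divisors.filter (fun e => k ∣ d ^ e + 1), μ (N / e))
      = ∏ k ∈ D, (if (∀ m ∈ N.properDivisors, ¬ k ∣ d ^ m + 1) then c k else 1) :=
        Finset.prod_congr rfl (fun k hk => by rw [hexp k hk]; split <;> simp)
    _ = ∏ k ∈ D.filter (fun k => ∀ m ∈ N.properDivisors, ¬ k ∣ d ^ m + 1), c k :=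
        (Finset.prod_filter _ _).symm
    _ = algebraMap (Polynomial ℚ) (RatFunc ℚ)
          (∏ k ∈ D.filter (fun k => ∀ m ∈ N.properDivisors, ¬ k ∣ d ^ m + 1),
            cyclotomic k ℚ) := (map_prod _ _ _).symm
end

section
/- Let φ(z) = z^2 and N ≥ 2. The N-th dynatomic polynomial Φ*_N(z) = ∏_{k ∣ N}(z^{2^k} − z)^{μ(N/k)} is irreducible over ℚ if and only if 2^N − 1 is prime. -/
open scoped BigOperators
open Polynomial

open ArithmeticFunction ArithmeticFunction.Moebius ArithmeticFunction.zeta in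
private lemma sum_moebius_divisors (n : ℕ) :
    (∑ d ∈ n.divisors, μ d) = if n = 1 then 1 else 0 := by
  rcases Nat.eq_zero_or_pos n with rfl | hn
  · simp
  · have h := congrArg (fun f : ArithmeticFunction ℤ => f n) moebius_mul_coe_zeta
    simp only [mul_apply, one_apply] at h
    rw [← h, Nat.sum_divisorsAntidiagonal (f := fun a b => (ArithmeticFunction.moebius a : ℤ) * (↑(ζ : ArithmeticFunction ℕ) : ArithmeticFunction ℤ) b)]
    apply Finset.sum_congr rfl
    intro d hd
    rw [Nat.mem_divisors] at hd
    have h2 : n / d ≠ 0 :=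
      Nat.ne_of_gt (Nat.div_pos (Nat.le_of_dvd hn hd.1) (Nat.pos_of_dvd_of_pos hd.1 hn))
    simp [natCoe_apply, zeta_apply, h2]

private lemma dvd_two_pow_sub_one_iff (m k : ℕ) :
    m ∣ 2 ^ k - 1 ↔ orderOf (2 : ZMod m) ∣ k := by
  have h1 : (1:ℕ) ≤ 2 ^ k := Nat.one_le_two_pow
  rw [← ZMod.natCast_eq_zero_iff, Nat.cast_sub h1]
  push_cast
  rw [sub_eq_zero, ← orderOf_dvd_iff_pow_eq_one]

open ArithmeticFunction ArithmeticFunction.Moebius in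
private lemma moeb_filter_sum (N e : ℕ) (hN : 0 < N) (he : e ∣ N) (he0 : 0 < e) :
    (∑ k ∈ N.divisors, if e ∣ k then (μ (N / k) : ℤ) else 0) = if e = N then 1 else 0 := by
  rw [← Finset.sum_filter]
  have key : (∑ k ∈ N.divisors.filter (fun k => e ∣ k), μ (N / k))
      = ∑ j ∈ (N / e).divisors, μ ((N / e) / j) := by
    apply Finset.sum_nbij' (i := fun k => k / e) (j := fun j => e * j)
    · intro k hk
      simp only [Finset.mem_filter, Nat.mem_divisors] at hk
      obtain ⟨⟨hkN, hN0⟩, j, rfl⟩ := hk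
      rw [Nat.mul_div_cancel_left _ he0, Nat.mem_divisors]
      constructor
      · have hNe : N = e * (N / e) := (Nat.mul_div_cancel' he).symm
        rw [hNe] at hkN
        exact (Nat.mul_dvd_mul_iff_left he0).mp hkN
      · exact Nat.ne_of_gt (Nat.div_pos (Nat.le_of_dvd hN he) he0)
    · intro j hj
      rw [Nat.mem_divisors] at hj
      simp only [Finset.mem_filter, Nat.mem_divisors]
      refine ⟨⟨?_, Nat.ne_of_gt hN⟩, Dvd.intro j rfl⟩
      calc e * j ∣ e * (N / e) := Nat.mul_dvd_mul_left e hj.1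
        _ = N := Nat.mul_div_cancel' he
    · intro k hk
      simp only [Finset.mem_filter, Nat.mem_divisors] at hk
      exact Nat.mul_div_cancel' hk.2
    · intro j _
      exact Nat.mul_div_cancel_left _ he0
    · intro k hk
      simp only [Finset.mem_filter, Nat.mem_divisors] at hk
      obtain ⟨⟨hkN, hN0⟩, j, rfl⟩ := hk
      rw [Nat.mul_div_cancel_left _ he0, Nat.div_div_eq_div_mul, Nat.mul_comm e j,
        ← Nat.div_div_eq_div_mul]
  rw [key, Nat.sum_div_divisors, sum_moebius_divisors]
  congr 1
  simp only [eq_iff_iff]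
  constructor
  · intro h
    have := Nat.mul_div_cancel' he
    rw [h, Nat.mul_one] at this
    exact this
  · intro h
    subst h
    exact Nat.div_self he0

private lemma prod_zpow_eq {G₀ : Type*} [CommGroupWithZero G₀] (x : G₀) (hx : x ≠ 0)
    (s : Finset ℕ) (f : ℕ → ℤ) : ∏ k ∈ s, x ^ f k = x ^ (∑ k ∈ s, f k) := by
  classical
  induction s using Finset.induction with
  | empty => simp
  | insert _ _ h ih => rw [Finset.prod_insert h, Finset.sum_insert h, ih, zpow_add₀ hx]

open ArithmeticFunction ArithmeticFunction.Moebius in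
private lemma prod_eq_cyclo (N : ℕ) (hN : 2 ≤ N) :
    (∏ k ∈ N.divisors,
        (algebraMap (Polynomial ℚ) (RatFunc ℚ) (X ^ (2 ^ k) - X)) ^ (μ (N / k) : ℤ))
      = algebraMap (Polynomial ℚ) (RatFunc ℚ)
        (∏ m ∈ ((2 ^ N - 1).divisors.filter fun m => orderOf (2 : ZMod m) = N),
          cyclotomic m ℚ) := by
  classical
  set A := algebraMap (Polynomial ℚ) (RatFunc ℚ) with hA
  set D := (2 ^ N - 1).divisors with hDdef
  set f : ℕ → RatFunc ℚ := fun m => A (cyclotomic m ℚ) with hf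
  have hN0 : N ≠ 0 := by omega
  have hMpos : 0 < 2 ^ N - 1 := by
    have : 4 ≤ 2 ^ N := by calc (4:ℕ) = 2 ^ 2 := rfl
                                _ ≤ 2 ^ N := Nat.pow_le_pow_right (by norm_num) hN
    omega
  have hfne : ∀ m, f m ≠ 0 := fun m => by
    simp only [hf]
    exact RatFunc.algebraMap_ne_zero (cyclotomic_ne_zero m ℚ)
  have hD : ∀ k ∈ N.divisors, A (X ^ (2 ^ k) - X)
      = A X * ∏ m ∈ D, (if orderOf (2 : ZMod m) ∣ k then f m else 1) := by
    intro k hk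
    obtain ⟨hkN, -⟩ := Nat.mem_divisors.mp hk
    have hk0 : 0 < k := Nat.pos_of_dvd_of_pos hkN (by omega)
    have h2k : (1:ℕ) ≤ 2 ^ k := Nat.one_le_two_pow
    have hkpos : 0 < 2 ^ k - 1 := by
      have : 2 ≤ 2 ^ k := by calc (2:ℕ) = 2^1 := rfl
                                  _ ≤ 2 ^ k := Nat.pow_le_pow_right (by norm_num) hk0
      omega
    have h1 : (X : Polynomial ℚ) ^ (2 ^ k) - X
        = X * ∏ d ∈ (2 ^ k - 1).divisors, cyclotomic d ℚ := by
      rw [prod_cyclotomic_eq_X_pow_sub_one hkpos, mul_sub, mul_one, ← pow_succ',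
        Nat.sub_add_cancel h2k]
    have hsub : (2 ^ k - 1).divisors = D.filter (fun m => orderOf (2 : ZMod m) ∣ k) := by
      have hdvd : (2 ^ k - 1) ∣ (2 ^ N - 1) := by
        have h3 := Nat.sub_dvd_pow_sub_pow (2 ^ k) 1 (N / k)
        rwa [one_pow, ← pow_mul, Nat.mul_div_cancel' hkN] at h3
      ext m
      simp only [Finset.mem_filter, hDdef, Nat.mem_divisors]
      constructor
      · rintro ⟨hm, -⟩
        exact ⟨⟨hm.trans hdvd, Nat.ne_of_gt hMpos⟩, (dvd_two_pow_sub_one_iff m k).mp hm⟩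
      · rintro ⟨-, hord⟩
        exact ⟨(dvd_two_pow_sub_one_iff m k).mpr hord, Nat.ne_of_gt hkpos⟩
    rw [h1, map_mul, map_prod, hsub, Finset.prod_filter]
  have hX : A (X : Polynomial ℚ) ≠ 0 := by
    exact RatFunc.algebraMap_ne_zero X_ne_zero
  calc (∏ k ∈ N.divisors, (A (X ^ (2 ^ k) - X)) ^ (μ (N / k) : ℤ))
      = ∏ k ∈ N.divisors, ((A X) ^ (μ (N / k) : ℤ) *
          ∏ m ∈ D, (if orderOf (2 : ZMod m) ∣ k then f m else 1) ^ (μ (N / k) : ℤ)) := by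
        refine Finset.prod_congr rfl fun k hk => ?_
        rw [hD k hk, mul_zpow, Finset.prod_zpow]
    _ = ((A X) ^ (∑ k ∈ N.divisors, (μ (N / k) : ℤ))) *
          ∏ m ∈ D, ∏ k ∈ N.divisors,
            (if orderOf (2 : ZMod m) ∣ k then f m else 1) ^ (μ (N / k) : ℤ) := by
        rw [Finset.prod_mul_distrib, prod_zpow_eq _ hX, Finset.prod_comm]
    _ = ∏ m ∈ D, (if orderOf (2 : ZMod m) = N then f m else 1) := by
        have hsum : (∑ k ∈ N.divisors, (μ (N / k) : ℤ)) = 0 := by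
          rw [Nat.sum_div_divisors N (fun k => (μ k : ℤ)), sum_moebius_divisors]
          simp only [if_neg (by omega : N ≠ 1)]
        rw [hsum, zpow_zero, one_mul]
        refine Finset.prod_congr rfl fun m hm => ?_
        have hmdvd : m ∣ 2 ^ N - 1 := (Nat.mem_divisors.mp hm).1
        have heN : orderOf (2 : ZMod m) ∣ N := (dvd_two_pow_sub_one_iff m N).mp hmdvd
        have he0 : 0 < orderOf (2 : ZMod m) := by
          rcases Nat.eq_zero_or_pos (orderOf (2 : ZMod m)) with h | h
          · rw [h] at heN; omega
          · exact h
        calc (∏ k ∈ N.divisors,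
              (if orderOf (2 : ZMod m) ∣ k then f m else 1) ^ (μ (N / k) : ℤ))
            = ∏ k ∈ N.divisors,
              (f m) ^ (if orderOf (2 : ZMod m) ∣ k then (μ (N / k) : ℤ) else 0) := by
              refine Finset.prod_congr rfl fun k _ => ?_
              split_ifs <;> simp
          _ = (f m) ^ (∑ k ∈ N.divisors,
                if orderOf (2 : ZMod m) ∣ k then (μ (N / k) : ℤ) else 0) :=
              prod_zpow_eq _ (hfne m) _ _
          _ = (f m) ^ (if orderOf (2 : ZMod m) = N then (1:ℤ) else 0) := by
              rw [moeb_filter_sum N _ (by omega) heN he0]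
          _ = (if orderOf (2 : ZMod m) = N then f m else 1) := by
              split_ifs <;> simp
    _ = A (∏ m ∈ (D.filter fun m => orderOf (2 : ZMod m) = N), cyclotomic m ℚ) := by
        rw [map_prod, Finset.prod_filter]

private lemma order_two_M (N : ℕ) (hN : 2 ≤ N) (m : ℕ) (hm : m ∣ 2 ^ N - 1)
    (hbig : ∀ d, d ∣ N → 0 < d → d ≠ N → ¬ (m ∣ 2 ^ d - 1)) :
    orderOf (2 : ZMod m) = N := by
  have heN : orderOf (2 : ZMod m) ∣ N := (dvd_two_pow_sub_one_iff m N).mp hm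
  have he0 : 0 < orderOf (2 : ZMod m) := by
    rcases Nat.eq_zero_or_pos (orderOf (2 : ZMod m)) with h | h
    · rw [h] at heN; omega
    · exact h
  by_contra hne
  exact hbig _ heN he0 hne ((dvd_two_pow_sub_one_iff m _).mpr dvd_rfl)

/-- For `φ(z) = z²` and `N ≥ 2`, the `N`-th dynatomic polynomial
`Φ*_N(z) = ∏_{k ∣ N}(z^{2^k} − z)^{μ(N/k)}` is irreducible over `ℚ` if and only if
`2^N − 1` is prime. -/
theorem dynatomic_square_irreducible_iff (N : ℕ) (hN : 2 ≤ N) (P : Polynomial ℚ)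
    (hP : algebraMap (Polynomial ℚ) (RatFunc ℚ) P =
      ∏ k ∈ N.divisors,
        (algebraMap (Polynomial ℚ) (RatFunc ℚ) (X ^ (2 ^ k) - X)) ^
          (ArithmeticFunction.moebius (N / k))) :
    Irreducible P ↔ Nat.Prime (2 ^ N - 1) := by
  classical
  set M := 2 ^ N - 1 with hMdef
  have h4 : 4 ≤ 2 ^ N := by
    calc (4:ℕ) = 2 ^ 2 := rfl
      _ ≤ 2 ^ N := Nat.pow_le_pow_right (by norm_num) hN
  have hM3 : 3 ≤ M := by omega
  set S := M.divisors.filter (fun m => orderOf (2 : ZMod m) = N) with hSdef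
  have hPe : P = ∏ m ∈ S, cyclotomic m ℚ :=
    RatFunc.algebraMap_injective ℚ (hP.trans (prod_eq_cyclo N hN))
  -- M ∈ S
  have hordM : orderOf (2 : ZMod M) = N := by
    apply order_two_M N hN M dvd_rfl
    intro d hdN hd0 hdne hMd
    have hdlt : d < N := lt_of_le_of_ne (Nat.le_of_dvd (by omega) hdN) hdne
    have : 2 ^ d - 1 < M := by
      have : 2 ^ d < 2 ^ N := Nat.pow_lt_pow_right (by norm_num) hdlt
      have h1 : (1:ℕ) ≤ 2 ^ d := Nat.one_le_two_pow
      omega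
    have := Nat.le_of_dvd (by
      have : 2 ≤ 2 ^ d := by
        calc (2:ℕ) = 2 ^ 1 := rfl
          _ ≤ 2 ^ d := Nat.pow_le_pow_right (by norm_num) hd0
      omega) hMd
    omega
  have hMS : M ∈ S := by
    rw [hSdef, Finset.mem_filter, Nat.mem_divisors]
    exact ⟨⟨dvd_rfl, by omega⟩, hordM⟩
  constructor
  · -- Irreducible → Prime
    intro hirr
    by_contra hMp
    -- construct second element m of S
    have hM1 : M ≠ 1 := by omega
    set p := M.minFac with hpdef
    have hp : p.Prime := Nat.minFac_prime hM1
    have hpdvd : p ∣ M := Nat.minFac_dvd M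
    set m := M / p with hmdef
    have hMpm : p * m = M := Nat.mul_div_cancel' hpdvd
    have hm1 : m ≠ 1 := by
      intro h
      rw [h, Nat.mul_one] at hMpm
      exact hMp (hMpm ▸ hp)
    have hm0 : m ≠ 0 := by
      intro h; rw [h, Nat.mul_zero] at hMpm; omega
    have hmdvd : m ∣ M := ⟨p, by rw [← hMpm, Nat.mul_comm]⟩
    have hmne : m ≠ M := by
      intro h
      rw [h] at hMpm
      have : p = 1 :=
        Nat.eq_of_mul_eq_mul_right (by omega : 0 < M) (by rw [hMpm, Nat.one_mul])
      exact hp.one_lt.ne' this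
    have hple : p ≤ m := Nat.minFac_le_of_dvd (Nat.two_le_iff m |>.mpr ⟨hm0, hm1⟩) hmdvd
    have hordm : orderOf (2 : ZMod m) = N := by
      apply order_two_M N hN m hmdvd
      intro d hdN hd0 hdne hmd
      obtain ⟨c, hc⟩ := hdN
      have hc2 : 2 ≤ c := by
        have hc0 : c ≠ 0 := by rintro rfl; simp at hc; omega
        have hc1 : c ≠ 1 := by rintro rfl; simp at hc; exact hdne hc.symm
        omega
      have h2d : 2 * d ≤ N := by
        calc 2 * d = d * 2 := by ring
          _ ≤ d * c := Nat.mul_le_mul_left d hc2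
          _ = N := hc.symm
      have hmle : m ≤ 2 ^ d - 1 := Nat.le_of_dvd (by
        have : 2 ≤ 2 ^ d := by
          calc (2:ℕ) = 2 ^ 1 := rfl
            _ ≤ 2 ^ d := Nat.pow_le_pow_right (by norm_num) hd0
        omega) hmd
      have hkey : (2 ^ d - 1) * (2 ^ d - 1) < 2 ^ N - 1 := by
        have h2 : 2 ≤ 2 ^ d := by
          calc (2:ℕ) = 2 ^ 1 := rfl
            _ ≤ 2 ^ d := Nat.pow_le_pow_right (by norm_num) hd0
        have hsq : 2 ^ d * 2 ^ d ≤ 2 ^ N := by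
          rw [← pow_add]
          exact Nat.pow_le_pow_right (by norm_num) (by omega)
        obtain ⟨b, hb⟩ : ∃ b, 2 ^ d = b + 2 := ⟨2 ^ d - 2, by omega⟩
        rw [hb] at hsq ⊢
        have h5 : (b + 2 - 1) * (b + 2 - 1) = b * b + 2 * b + 1 := by
          have : b + 2 - 1 = b + 1 := by omega
          rw [this]; ring
        have h6 : (b + 2) * (b + 2) = b * b + 4 * b + 4 := by ring
        omega
      have : M < M := by
        calc M = p * m := hMpm.symm
          _ ≤ m * m := Nat.mul_le_mul_right m hple
          _ ≤ (2 ^ d - 1) * (2 ^ d - 1) := Nat.mul_le_mul hmle hmle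
          _ < 2 ^ N - 1 := hkey
          _ = M := rfl
      omega
    have hmS : m ∈ S := by
      rw [hSdef, Finset.mem_filter, Nat.mem_divisors]
      exact ⟨⟨hmdvd, by omega⟩, hordm⟩
    have hMem : M ∈ S.erase m := Finset.mem_erase.mpr ⟨fun h => hmne h.symm, hMS⟩
    have hfact : P = cyclotomic m ℚ * ∏ x ∈ S.erase m, cyclotomic x ℚ := by
      rw [hPe]; exact (Finset.mul_prod_erase S (fun n => cyclotomic n ℚ) hmS).symm
    have hnotunit : ∀ n : ℕ, 0 < n → ¬ IsUnit (cyclotomic n ℚ) := by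
      intro n hn hu
      have := Polynomial.natDegree_eq_zero_of_isUnit hu
      rw [natDegree_cyclotomic] at this
      have := Nat.totient_pos.mpr hn
      omega
    rcases hirr.isUnit_or_isUnit hfact with h | h
    · exact hnotunit m (by omega) h
    · exact hnotunit M (by omega)
        (isUnit_of_dvd_unit (Finset.dvd_prod_of_mem (fun n => cyclotomic n ℚ) hMem) h)
  · intro hpr
    have hS : S = {M} := by
      apply Finset.eq_singleton_iff_unique_mem.mpr
      refine ⟨hMS, ?_⟩
      intro x hx
      rw [hSdef, Finset.mem_filter, Nat.mem_divisors] at hx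
      obtain ⟨⟨hxd, -⟩, hord⟩ := hx
      rcases (Nat.dvd_prime hpr).mp hxd with h1 | h
      · exfalso
        subst h1
        have h2 : (2 : ZMod 1) = 1 := Subsingleton.elim _ _
        rw [h2, orderOf_one] at hord
        omega
      · exact h
    rw [hPe, hS, Finset.prod_singleton]
    exact cyclotomic.irreducible_rat (by omega)
end

section
/- Let φ and h be rational maps with φ∘h = h∘φ and h^p = id, and let Q be a point with φ(Q) = h(Q), whose h-orbit Q_i = h^i(Q) avoids ∞ and avoids all zeros of the derivatives involved. Then ∏_{i=0}^{p−1} φ'(Q_i) = (φ'(Q)/h'(Q))^p. -/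
open scoped BigOperators

/-- Let `φ` and `h` be (rational) maps with `φ∘h = h∘φ` and `h^p = id`, and `Q` a point
with `φ(Q) = h(Q)`, whose `h`-orbit `Qᵢ = h^i(Q)` avoids `∞` and the zeros of the
derivatives involved.  Then `∏_{i=0}^{p−1} φ'(Qᵢ) = (φ'(Q)/h'(Q))^p`. -/
theorem prod_deriv_phi_orbit (p : ℕ) (hp : 0 < p) (φ h : ℂ → ℂ)
    (hcomm : φ ∘ h = h ∘ φ) (hiter : h^[p] = id)
    (Q : ℂ) (hQ : φ Q = h Q)
    (hdφ : ∀ i < p, DifferentiableAt ℂ φ (h^[i] Q))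
    (hdh : ∀ i < p, DifferentiableAt ℂ h (h^[i] Q))
    (hnz : ∀ i < p, deriv h (h^[i] Q) ≠ 0) :
    ∏ i ∈ Finset.range p, deriv φ (h^[i] Q) = (deriv φ Q / deriv h Q) ^ p := by
  have hcomm' : Function.Commute φ h := funext_iff.mp hcomm
  -- φ(Q_i) = Q_{i+1}
  have hφQ : ∀ i, φ (h^[i] Q) = h^[i+1] Q := by
    intro i
    have := (hcomm'.iterate_right i) Q
    rw [this, hQ, ← Function.iterate_succ_apply]
  -- φ'(Q_i) = c * h'(Q_i) for i < p
  set c := deriv φ Q / deriv h Q with hc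
  have key : ∀ i < p, deriv φ (h^[i] Q) = c * deriv h (h^[i] Q) := by
    intro i hi
    induction i with
    | zero =>
      have h0 := hnz 0 hp
      simp only [Function.iterate_zero, id_eq] at h0 ⊢
      rw [hc]
      field_simp
    | succ n ih =>
      have hn : n < p := Nat.lt_of_succ_lt hi
      have h1 : deriv (φ ∘ h) (h^[n] Q) = deriv φ (h^[n+1] Q) * deriv h (h^[n] Q) := by
        rw [deriv_comp _ (by rw [← Function.iterate_succ_apply' h n Q]; exact hdφ _ hi)
          (hdh _ hn), Function.iterate_succ_apply']
      have h2 : deriv (h ∘ φ) (h^[n] Q) = deriv h (h^[n+1] Q) * deriv φ (h^[n] Q) := by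
        rw [deriv_comp _ (by rw [hφQ]; exact hdh _ hi) (hdφ _ hn), hφQ]
      rw [hcomm] at h1
      have h3 : deriv φ (h^[n+1] Q) * deriv h (h^[n] Q)
          = deriv h (h^[n+1] Q) * deriv φ (h^[n] Q) := by rw [← h1, h2]
      have hnz' := hnz n hn
      rw [ih hn] at h3
      have h4 : deriv φ (h^[n+1] Q) * deriv h (h^[n] Q)
          = (c * deriv h (h^[n+1] Q)) * deriv h (h^[n] Q) := by linear_combination h3
      exact mul_right_cancel₀ hnz' h4
  -- product of h'(Q_i) is deriv of h^[p] at Q, which is 1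
  have hiterd : ∀ n ≤ p, DifferentiableAt ℂ (h^[n]) Q ∧
      deriv (h^[n]) Q = ∏ i ∈ Finset.range n, deriv h (h^[i] Q) := by
    intro n hn
    induction n with
    | zero => simp
    | succ m ih =>
      obtain ⟨hd, hdv⟩ := ih (Nat.le_of_succ_le hn)
      have hm : m < p := hn
      constructor
      · rw [Function.iterate_succ']
        exact (hdh m hm).comp Q hd
      · rw [Function.iterate_succ', deriv_comp Q (hdh m hm) hd, hdv,
          Finset.prod_range_succ]
        ring
  have hprodh : ∏ i ∈ Finset.range p, deriv h (h^[i] Q) = 1 := by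
    have := (hiterd p le_rfl).2
    rw [hiter] at this
    simp at this
    rw [← this]
  calc ∏ i ∈ Finset.range p, deriv φ (h^[i] Q)
      = ∏ i ∈ Finset.range p, c * deriv h (h^[i] Q) :=
        Finset.prod_congr rfl fun i hi => key i (Finset.mem_range.mp hi)
    _ = c ^ p * ∏ i ∈ Finset.range p, deriv h (h^[i] Q) := by
        rw [Finset.prod_mul_distrib, Finset.prod_const, Finset.card_range]
    _ = c ^ p := by rw [hprodh, mul_one]
end

section
/- Let φ_{a,b}(x,y) = [x² + axy : bxy + y²] and N > 1. The coefficient of x^{ν₂(N)} in the N-th dynatomic polynomial Φ*_{N,φ_{a,b}}(x,y) (viewed as a polynomial in x over ℤ[a,b][y]) equals the N-th cyclotomic polynomial C_N(b), where ν₂(N) = Σ_{k ∣ N} μ(N/k)·2^k. -/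
open scoped BigOperators
open Polynomial

lemma dyn_split_prod {K : Type*} [Field K] (D : Finset ℕ) (e : ℕ → ℤ)
    (he : ∀ k ∈ D, e k = 1 ∨ e k = -1 ∨ e k = 0)
    (c : ℕ → K) (hc : ∀ k ∈ D, c k ≠ 0) :
    (∏ k ∈ D.filter (fun k => e k = -1), c k) * ∏ k ∈ D, c k ^ (e k) =
      ∏ k ∈ D.filter (fun k => e k = 1), c k := by
  classical
  induction D using Finset.induction_on with
  | empty => simp
  | insert _ _ ha =>
    rename_i a s ih
    have hes : ∀ k ∈ s, e k = 1 ∨ e k = -1 ∨ e k = 0 :=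
      fun k hk => he k (Finset.mem_insert_of_mem hk)
    have hcs : ∀ k ∈ s, c k ≠ 0 := fun k hk => hc k (Finset.mem_insert_of_mem hk)
    have ihs := ih hes hcs
    rw [Finset.filter_insert, Finset.filter_insert, Finset.prod_insert ha]
    rcases he a (Finset.mem_insert_self a s) with h1 | h1 | h1
    · rw [if_neg (by rw [h1]; norm_num), if_pos h1, h1, zpow_one,
        Finset.prod_insert (by simp [ha]), ← ihs]
      ring
    · rw [if_pos h1, if_neg (by rw [h1]; norm_num), h1,
        Finset.prod_insert (by simp [ha]), zpow_neg_one, mul_mul_mul_comm,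
        mul_inv_cancel₀ (hc a (Finset.mem_insert_self a s)), one_mul, ihs]
    · rw [if_neg (by rw [h1]; norm_num), if_neg (by rw [h1]; norm_num), h1, zpow_zero,
        one_mul, ihs]

lemma dyn_split_sum (D : Finset ℕ) (e : ℕ → ℤ)
    (he : ∀ k ∈ D, e k = 1 ∨ e k = -1 ∨ e k = 0) (c : ℕ → ℤ) :
    ∑ k ∈ D, e k * c k =
      (∑ k ∈ D.filter (fun k => e k = 1), c k)
        - ∑ k ∈ D.filter (fun k => e k = -1), c k := by
  classical
  induction D using Finset.induction_on with
  | empty => simp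
  | insert _ _ ha =>
    rename_i a s ih
    have hes : ∀ k ∈ s, e k = 1 ∨ e k = -1 ∨ e k = 0 :=
      fun k hk => he k (Finset.mem_insert_of_mem hk)
    have ihs := ih hes
    rw [Finset.filter_insert, Finset.filter_insert, Finset.sum_insert ha]
    rcases he a (Finset.mem_insert_self a s) with h1 | h1 | h1
    · rw [if_pos h1, if_neg (by rw [h1]; norm_num), h1,
        Finset.sum_insert (by simp [ha]), ihs]; ring
    · rw [if_neg (by rw [h1]; norm_num), if_pos h1, h1,
        Finset.sum_insert (by simp [ha]), ihs]; ring
    · rw [if_neg (by rw [h1]; norm_num), if_neg (by rw [h1]; norm_num), h1, ihs]; ring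

lemma dyn_add_left {R : Type*} [Semiring R] (p q : Polynomial R) (h : q.degree < p.degree) :
    (p + q).natDegree = p.natDegree ∧ (p + q).leadingCoeff = p.leadingCoeff :=
  ⟨Polynomial.natDegree_eq_of_degree_eq (Polynomial.degree_add_eq_left_of_degree_lt h),
   Polynomial.leadingCoeff_add_of_degree_lt' h⟩

abbrev DynR := MvPolynomial (Fin 3) ℤ

lemma dyn_add_left' {R : Type*} [Semiring R] (p q : Polynomial R) (h : q.degree < p.degree) :
    (p + q).natDegree = p.natDegree ∧ (p + q).leadingCoeff = p.leadingCoeff :=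
  ⟨Polynomial.natDegree_eq_of_degree_eq (Polynomial.degree_add_eq_left_of_degree_lt h),
   Polynomial.leadingCoeff_add_of_degree_lt' h⟩

lemma dyn_FG (F G : ℕ → Polynomial DynR)
    (hF1 : F 1 = X ^ 2 + C (MvPolynomial.X 0 * MvPolynomial.X 2) * X)
    (hG1 : G 1 = C (MvPolynomial.X 1 * MvPolynomial.X 2) * X + C (MvPolynomial.X 2 ^ 2))
    (hFrec : ∀ n, 1 ≤ n → F (n + 1) = (F n) ^ 2 + C (MvPolynomial.X 0) * (F n * G n))
    (hGrec : ∀ n, 1 ≤ n → G (n + 1) = C (MvPolynomial.X 1) * (F n * G n) + (G n) ^ 2) :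
    ∀ k, 1 ≤ k → (F k).Monic ∧ (F k).natDegree = 2 ^ k ∧
      (G k).natDegree = 2 ^ k - 1 ∧
      (G k).leadingCoeff = (MvPolynomial.X 1 : DynR) ^ k * MvPolynomial.X 2 := by
  have ha : (MvPolynomial.X 0 : DynR) ≠ 0 := MvPolynomial.X_ne_zero 0
  have hb : (MvPolynomial.X 1 : DynR) ≠ 0 := MvPolynomial.X_ne_zero 1
  have hy : (MvPolynomial.X 2 : DynR) ≠ 0 := MvPolynomial.X_ne_zero 2
  intro k hk
  induction k with
  | zero => omega
  | succ n ih =>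
    by_cases hn : n = 0
    · subst hn
      rw [hF1, hG1]
      have hby : (MvPolynomial.X 1 * MvPolynomial.X 2 : DynR) ≠ 0 := mul_ne_zero hb hy
      have hdF : degree (C (MvPolynomial.X 0 * MvPolynomial.X 2 : DynR) * X) <
          degree ((X : Polynomial DynR) ^ 2) := by
        rw [degree_X_pow]
        calc degree (C (MvPolynomial.X 0 * MvPolynomial.X 2 : DynR) * X)
            ≤ degree (C (MvPolynomial.X 0 * MvPolynomial.X 2 : DynR)) + degree (X : Polynomial DynR) :=
              degree_mul_le _ _
          _ ≤ 0 + 1 := by rw [degree_X]; exact add_le_add_left (degree_C_le (R := DynR)) 1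
          _ < 2 := by norm_num
      have hdG : degree (C (MvPolynomial.X 2 ^ 2 : DynR)) <
          degree (C (MvPolynomial.X 1 * MvPolynomial.X 2 : DynR) * X) := by
        rw [degree_C_mul_X hby]
        exact lt_of_le_of_lt degree_C_le (by norm_num)
      obtain ⟨hd1, hl1⟩ := dyn_add_left' _ _ hdF
      obtain ⟨hd2, hl2⟩ := dyn_add_left' _ _ hdG
      refine ⟨(monic_X_pow 2).add_of_left hdF, ?_, ?_, ?_⟩
      · rw [hd1, natDegree_X_pow]; norm_num
      · rw [hd2, natDegree_C_mul_X _ hby]; norm_num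
      · rw [hl2, leadingCoeff_mul, leadingCoeff_C, leadingCoeff_X, pow_one, mul_one]
    · have hn1 : 1 ≤ n := by omega
      obtain ⟨hFm, hFd, hGd, hGl⟩ := ih hn1
      have h2n : 1 ≤ 2 ^ n := Nat.one_le_two_pow
      have hp2 : 2 ^ (n + 1) = 2 ^ n * 2 := pow_succ 2 n
      have hGl0 : (G n).leadingCoeff ≠ 0 := by
        rw [hGl]; exact mul_ne_zero (pow_ne_zero _ hb) hy
      have hG0 : G n ≠ 0 := leadingCoeff_ne_zero.mp hGl0
      have hF0 : F n ≠ 0 := hFm.ne_zero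
      have hFG0 : F n * G n ≠ 0 := mul_ne_zero hF0 hG0
      rw [hFrec n hn1, hGrec n hn1]
      -- F part
      have hF2d : (F n ^ 2).natDegree = 2 ^ (n + 1) := by
        rw [natDegree_pow, hFd, hp2]; ring
      have hqF : (C (MvPolynomial.X 0 : DynR) * (F n * G n)).natDegree < (F n ^ 2).natDegree := by
        have b1 := natDegree_mul_le (p := C (MvPolynomial.X 0 : DynR)) (q := F n * G n)
        have b2 := natDegree_mul_le (p := F n) (q := G n)
        rw [natDegree_C] at b1
        rw [hFd, hGd] at b2
        rw [hF2d]
        omega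
      have hqFd := degree_lt_degree hqF
      obtain ⟨hdF, _⟩ := dyn_add_left' _ _ hqFd
      -- G part
      have hCb : (C (MvPolynomial.X 1 : DynR)) ≠ 0 := fun h => hb (by simpa using h)
      have hpd : (C (MvPolynomial.X 1 : DynR) * (F n * G n)).natDegree = 2 ^ (n + 1) - 1 := by
        rw [natDegree_mul hCb hFG0, natDegree_mul hF0 hG0, natDegree_C, hFd, hGd, hp2]
        omega
      have hpl : (C (MvPolynomial.X 1 : DynR) * (F n * G n)).leadingCoeff =
          (MvPolynomial.X 1 : DynR) ^ (n + 1) * MvPolynomial.X 2 := by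
        rw [leadingCoeff_mul, leadingCoeff_mul, leadingCoeff_C, hFm.leadingCoeff, hGl]
        ring
      have hqG : (G n ^ 2).natDegree < (C (MvPolynomial.X 1 : DynR) * (F n * G n)).natDegree := by
        rw [natDegree_pow, hGd, hpd, hp2]
        omega
      obtain ⟨hdG, hlG⟩ := dyn_add_left' _ _ (degree_lt_degree hqG)
      exact ⟨(hFm.pow 2).add_of_left hqFd, hdF.trans hF2d, hdG.trans hpd, hlG.trans hpl⟩

/-- For `φ_{a,b}(x,y) = [x² + axy : bxy + y²]` and `N > 1`, the coefficient of
`x^{ν₂(N)}` in the `N`-th dynatomic polynomial `Φ*_N` (characterized by the Möbius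
product `Φ*_N = ∏_{k∣N} (y·F_k − x·G_k)^{μ(N/k)}` in the fraction field) equals the
`N`-th cyclotomic polynomial evaluated at `b`, where `ν₂(N) = ∑_{k∣N} μ(N/k)·2^k`.
Here `a = X 0`, `b = X 1`, `y = X 2` in `ℤ[a,b,y]` and `x` is the polynomial variable. -/
theorem dynatomic_lead_coeff_eq_cyclotomic
    (F G : ℕ → Polynomial (MvPolynomial (Fin 3) ℤ))
    (hF1 : F 1 = X ^ 2 + C (MvPolynomial.X 0 * MvPolynomial.X 2) * X)
    (hG1 : G 1 = C (MvPolynomial.X 1 * MvPolynomial.X 2) * X + C (MvPolynomial.X 2 ^ 2))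
    (hFrec : ∀ n, 1 ≤ n → F (n + 1) = (F n) ^ 2 + C (MvPolynomial.X 0) * (F n * G n))
    (hGrec : ∀ n, 1 ≤ n → G (n + 1) = C (MvPolynomial.X 1) * (F n * G n) + (G n) ^ 2)
    (N : ℕ) (hN : 1 < N)
    (Φstar : Polynomial (MvPolynomial (Fin 3) ℤ))
    (hΦ : algebraMap (Polynomial (MvPolynomial (Fin 3) ℤ))
        (FractionRing (Polynomial (MvPolynomial (Fin 3) ℤ))) Φstar =
      ∏ k ∈ N.divisors,
        (algebraMap (Polynomial (MvPolynomial (Fin 3) ℤ))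
            (FractionRing (Polynomial (MvPolynomial (Fin 3) ℤ)))
            (C (MvPolynomial.X 2) * F k - X * G k)) ^
          (ArithmeticFunction.moebius (N / k)))
    (ν : ℕ) (hν : (ν : ℤ) = ∑ k ∈ N.divisors, ArithmeticFunction.moebius (N / k) * 2 ^ k) :
    Φstar.coeff ν =
      Polynomial.eval (MvPolynomial.X 1 : MvPolynomial (Fin 3) ℤ)
        (Polynomial.cyclotomic N (MvPolynomial (Fin 3) ℤ)) := by
  classical
  have hb : (MvPolynomial.X 1 : DynR) ≠ 0 := MvPolynomial.X_ne_zero 1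
  have hy : (MvPolynomial.X 2 : DynR) ≠ 0 := MvPolynomial.X_ne_zero 2
  have hbk : ∀ k : ℕ, 1 ≤ k → ((MvPolynomial.X 1 : DynR) ^ k - 1) ≠ 0 := by
    intro k hk h
    have := congrArg MvPolynomial.constantCoeff h
    simp [zero_pow (by omega : k ≠ 0)] at this
  have hbk' : ∀ k : ℕ, 1 ≤ k → (1 - (MvPolynomial.X 1 : DynR) ^ k) ≠ 0 := by
    intro k hk h
    exact hbk k hk (by linear_combination -h)
  set D := N.divisors with hD
  set e : ℕ → ℤ := fun k => ArithmeticFunction.moebius (N / k) with he_def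
  have he : ∀ k ∈ D, e k = 1 ∨ e k = -1 ∨ e k = 0 := by
    intro k _
    have h1 := ArithmeticFunction.abs_moebius_le_one (n := N / k)
    rw [abs_le] at h1
    simp only [he_def]
    omega
  set Φ : ℕ → Polynomial DynR := fun k => C (MvPolynomial.X 2) * F k - X * G k with hΦ_def
  -- properties of Φ k
  have hPhik : ∀ k, 1 ≤ k → (Φ k).natDegree = 2 ^ k ∧
      (Φ k).leadingCoeff = (1 - (MvPolynomial.X 1 : DynR) ^ k) * MvPolynomial.X 2 := by
    intro k hk
    obtain ⟨hFm, hFd, hGd, hGl⟩ := dyn_FG F G hF1 hG1 hFrec hGrec k hk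
    have h2k : 1 ≤ 2 ^ k := Nat.one_le_two_pow
    have hG0 : G k ≠ 0 := leadingCoeff_ne_zero.mp
      (by rw [hGl]; exact mul_ne_zero (pow_ne_zero _ hb) hy)
    have hCy : (C (MvPolynomial.X 2 : DynR)) ≠ 0 := by
      rw [Ne, C_eq_zero]; exact hy
    have hpd : (C (MvPolynomial.X 2 : DynR) * F k).natDegree = 2 ^ k := by
      rw [natDegree_mul hCy hFm.ne_zero, natDegree_C, hFd]; omega
    have hqd : ((X : Polynomial DynR) * G k).natDegree = 2 ^ k := by
      rw [natDegree_mul X_ne_zero hG0, natDegree_X, hGd]; omega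
    have hcoeff : (Φ k).coeff (2 ^ k) =
        (1 - (MvPolynomial.X 1 : DynR) ^ k) * MvPolynomial.X 2 := by
      have c1 : (C (MvPolynomial.X 2 : DynR) * F k).coeff (2 ^ k) =
          (C (MvPolynomial.X 2 : DynR) * F k).leadingCoeff := by
        conv_lhs => rw [← hpd]
        exact coeff_natDegree
      have c2 : ((X : Polynomial DynR) * G k).coeff (2 ^ k) =
          ((X : Polynomial DynR) * G k).leadingCoeff := by
        conv_lhs => rw [← hqd]
        exact coeff_natDegree
      rw [hΦ_def]
      simp only [coeff_sub]
      rw [c1, c2, leadingCoeff_mul, leadingCoeff_mul, leadingCoeff_C, leadingCoeff_X,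
        hFm.leadingCoeff, hGl]
      ring
    have hc0 : (Φ k).coeff (2 ^ k) ≠ 0 := by
      rw [hcoeff]; exact mul_ne_zero (hbk' k hk) hy
    have hle : (Φ k).natDegree ≤ 2 ^ k := by
      refine le_trans (natDegree_sub_le _ _) ?_
      rw [hpd, hqd]; omega
    have hge : 2 ^ k ≤ (Φ k).natDegree := le_natDegree_of_ne_zero hc0
    have hnd : (Φ k).natDegree = 2 ^ k := le_antisymm hle hge
    exact ⟨hnd, by rw [leadingCoeff, hnd, hcoeff]⟩
  have hk1 : ∀ k ∈ D, 1 ≤ k := fun k hk => Nat.pos_of_mem_divisors hk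
  have hPhine : ∀ k ∈ D, Φ k ≠ 0 := by
    intro k hk
    refine leadingCoeff_ne_zero.mp ?_
    rw [(hPhik k (hk1 k hk)).2]
    exact mul_ne_zero (hbk' k (hk1 k hk)) hy
  set K := FractionRing (Polynomial DynR)
  set φ := algebraMap (Polynomial DynR) K with hφ_def
  have inj : Function.Injective φ := IsFractionRing.injective _ _
  have hmapne : ∀ p : Polynomial DynR, p ≠ 0 → φ p ≠ 0 := by
    intro p hp
    exact fun h => hp (inj (by rw [h, map_zero]))
  -- dynatomic identity in the polynomial ring
  have hI := dyn_split_prod D e he (fun k => φ (Φ k)) (fun k hk => hmapne _ (hPhine k hk))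
  rw [show (∏ k ∈ D, (fun k => φ (Φ k)) k ^ e k) = φ Φstar from hΦ.symm] at hI
  simp only [← map_prod φ, ← map_mul φ] at hI
  have hBA : (∏ k ∈ D.filter (fun k => e k = -1), Φ k) * Φstar =
      ∏ k ∈ D.filter (fun k => e k = 1), Φ k := inj hI
  -- cyclotomic identity in the polynomial ring
  have hXn : ∀ n : ℕ, 0 < n → ((X : Polynomial DynR) ^ n - 1) ≠ 0 := by
    intro n hn
    have := (monic_X_pow_sub_C (1 : DynR) hn.ne').ne_zero
    simpa using this
  have hprodc : ∀ n > 0, ∏ i ∈ n.divisors, φ (cyclotomic i DynR) =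
      φ ((X : Polynomial DynR) ^ n - 1) := by
    intro n hn
    rw [← map_prod, prod_cyclotomic_eq_X_pow_sub_one hn]
  have hinv := (ArithmeticFunction.prod_eq_iff_prod_pow_moebius_eq_of_nonzero
      (f := fun n => φ (cyclotomic n DynR)) (g := fun n => φ ((X : Polynomial DynR) ^ n - 1))
      (fun n _ => hmapne _ (cyclotomic_ne_zero n DynR))
      (fun n hn => hmapne _ (hXn n hn))).mp hprodc N (by omega)
  rw [Nat.prod_divisorsAntidiagonal' (f := fun d k =>
      φ ((X : Polynomial DynR) ^ k - 1) ^ (ArithmeticFunction.moebius d))] at hinv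
  have hII0 := dyn_split_prod D e he (fun k => φ ((X : Polynomial DynR) ^ k - 1))
      (fun k hk => hmapne _ (hXn k (hk1 k hk)))
  rw [show (∏ k ∈ D, (fun k => φ ((X : Polynomial DynR) ^ k - 1)) k ^ e k) =
      φ (cyclotomic N DynR) from hinv] at hII0
  simp only [← map_prod φ, ← map_mul φ] at hII0
  have hCyc : (∏ k ∈ D.filter (fun k => e k = -1), ((X : Polynomial DynR) ^ k - 1)) *
      cyclotomic N DynR = ∏ k ∈ D.filter (fun k => e k = 1), ((X : Polynomial DynR) ^ k - 1) :=
    inj hII0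
  -- evaluate the cyclotomic identity at b
  have hII := congrArg (Polynomial.eval (MvPolynomial.X 1 : DynR)) hCyc
  simp only [eval_mul, eval_prod, eval_sub, eval_pow, eval_X, eval_one] at hII
  -- leading coefficients
  have hBne : (∏ k ∈ D.filter (fun k => e k = -1), Φ k) ≠ 0 :=
    Finset.prod_ne_zero_iff.mpr (fun k hk => hPhine k (Finset.mem_of_mem_filter k hk))
  have hAne : (∏ k ∈ D.filter (fun k => e k = 1), Φ k) ≠ 0 :=
    Finset.prod_ne_zero_iff.mpr (fun k hk => hPhine k (Finset.mem_of_mem_filter k hk))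
  have hΦ0 : Φstar ≠ 0 := by
    intro h
    rw [h, mul_zero] at hBA
    exact hAne hBA.symm
  -- cardinalities are equal
  have hcard : (D.filter (fun k => e k = 1)).card = (D.filter (fun k => e k = -1)).card := by
    have hsum := dyn_split_sum D e he (fun _ => 1)
    simp only [mul_one, Finset.sum_const, nsmul_eq_mul, smul_eq_mul] at hsum
    have hmu : ∑ k ∈ D, e k = 0 := by
      have h1 : ∑ k ∈ D, e k = ∑ k ∈ D, (ArithmeticFunction.moebius k : ℤ) := by
        rw [hD, he_def]
        exact Nat.sum_div_divisors N (fun d => (ArithmeticFunction.moebius d : ℤ))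
      rw [h1, ← ArithmeticFunction.coe_mul_zeta_apply, ArithmeticFunction.moebius_mul_coe_zeta,
        ArithmeticFunction.one_apply_ne (by omega : N ≠ 1)]
    rw [hmu] at hsum
    omega
  -- compute products of leading coefficients
  have hprodlc : ∀ S : Finset ℕ, S ⊆ D →
      ∏ k ∈ S, (Φ k).leadingCoeff =
        (-1 : DynR) ^ S.card * (MvPolynomial.X 2 : DynR) ^ S.card *
          ∏ k ∈ S, ((MvPolynomial.X 1 : DynR) ^ k - 1) := by
    intro S hS
    have : ∏ k ∈ S, (Φ k).leadingCoeff =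
        ∏ k ∈ S, ((-1 : DynR) * ((MvPolynomial.X 2 : DynR) *
          ((MvPolynomial.X 1 : DynR) ^ k - 1))) := by
      refine Finset.prod_congr rfl (fun k hk => ?_)
      rw [(hPhik k (hk1 k (hS hk))).2]; ring
    rw [this, Finset.prod_mul_distrib, Finset.prod_mul_distrib, Finset.prod_const,
      Finset.prod_const, mul_assoc]
  have hlc := congrArg leadingCoeff hBA
  rw [leadingCoeff_mul, leadingCoeff_prod, leadingCoeff_prod,
    hprodlc _ (Finset.filter_subset _ _), hprodlc _ (Finset.filter_subset _ _), hcard] at hlc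
  -- cancel to get the leading coefficient of Φstar
  set m := (D.filter (fun k => e k = -1)).card
  set Pm := ∏ k ∈ D.filter (fun k => e k = -1), ((MvPolynomial.X 1 : DynR) ^ k - 1) with hPm
  have hPmne : Pm ≠ 0 := Finset.prod_ne_zero_iff.mpr
    (fun k hk => hbk k (hk1 k (Finset.mem_of_mem_filter k hk)))
  have hc0ne : ((-1 : DynR) ^ m * (MvPolynomial.X 2 : DynR) ^ m * Pm) ≠ 0 :=
    mul_ne_zero (mul_ne_zero (pow_ne_zero _ (by norm_num)) (pow_ne_zero _ hy)) hPmne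
  have hlcΦ : Φstar.leadingCoeff =
      Polynomial.eval (MvPolynomial.X 1 : DynR) (cyclotomic N DynR) := by
    apply mul_left_cancel₀ hc0ne
    calc ((-1 : DynR) ^ m * (MvPolynomial.X 2 : DynR) ^ m * Pm) * Φstar.leadingCoeff
        = (-1 : DynR) ^ m * (MvPolynomial.X 2 : DynR) ^ m *
            ∏ k ∈ D.filter (fun k => e k = 1), ((MvPolynomial.X 1 : DynR) ^ k - 1) := by
          rw [mul_assoc, mul_assoc] at hlc ⊢
          exact hlc
      _ = (-1 : DynR) ^ m * (MvPolynomial.X 2 : DynR) ^ m *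
            (Pm * Polynomial.eval (MvPolynomial.X 1 : DynR) (cyclotomic N DynR)) := by
          rw [hII]
      _ = ((-1 : DynR) ^ m * (MvPolynomial.X 2 : DynR) ^ m * Pm) *
            Polynomial.eval (MvPolynomial.X 1 : DynR) (cyclotomic N DynR) := by ring
  -- degree computation
  have hdeg := congrArg natDegree hBA
  rw [natDegree_mul hBne hΦ0, natDegree_prod _ _
      (fun k hk => hPhine k (Finset.mem_of_mem_filter k hk)),
    natDegree_prod _ _ (fun k hk => hPhine k (Finset.mem_of_mem_filter k hk))] at hdeg
  rw [Finset.sum_congr rfl (fun k hk => (hPhik k (hk1 k (Finset.mem_of_mem_filter k hk))).1),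
    Finset.sum_congr rfl (fun k hk => (hPhik k (hk1 k (Finset.mem_of_mem_filter k hk))).1)] at hdeg
  have hνsplit := dyn_split_sum D e he (fun k => (2 : ℤ) ^ k)
  rw [← hν] at hνsplit
  have hdegZ := congrArg (Nat.cast (R := ℤ)) hdeg
  push_cast at hdegZ
  have hνdeg : ν = Φstar.natDegree := by omega
  rw [hνdeg, coeff_natDegree, hlcΦ]
end

section
/- For d ≥ 2 and p ≥ 2 prime and N ≥ 1 with (d,N) ≠ (2,1): if p ∤ N and N > 1, then Σ_{k ∣ N} μ(N/k)·d^{pk} − Σ_{k ∣ N} μ(N/k)·d^k > (p−1)·Σ_{k ∣ N} μ(N/k)·d^k; equivalently, the degree of Φ*_{pN} exceeds the degree of Ψ*_{pN}. In particular, for p ∤ N with N > 1, Σ_{k∣N} μ(N/k)(d^{pk} − d^k) > (p−1)·Σ_{k∣N} μ(N/k)·d^k. -/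
open scoped BigOperators
open Finset

private lemma aux_le_half (N k : ℕ) (hdvd : k ∣ N) (hlt : k < N) : k ≤ N / 2 := by
  obtain ⟨c, hc⟩ := hdvd
  have hk0 : k ≠ 0 := by rintro rfl; simp at hc; omega
  have hc2 : 2 ≤ c := by
    rcases Nat.lt_or_ge c 2 with h | h
    · interval_cases c <;> omega
    · exact h
  have h2k : 2 * k ≤ N := by nlinarith
  omega

private lemma aux_card_le (N : ℕ) (hN : 1 < N) : N.properDivisors.card ≤ N / 2 := by
  have hsub : N.properDivisors ⊆ Finset.Icc 1 (N / 2) := by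
    intro k hk
    rw [Nat.mem_properDivisors] at hk
    obtain ⟨hdvd, hlt⟩ := hk
    have hk1 : 1 ≤ k := Nat.pos_of_dvd_of_pos hdvd (by omega)
    exact Finset.mem_Icc.mpr ⟨hk1, aux_le_half N k hdvd hlt⟩
  calc N.properDivisors.card ≤ (Finset.Icc 1 (N / 2)).card := Finset.card_le_card hsub
    _ = N / 2 := by rw [Nat.card_Icc]; omega

private lemma aux_sum_bound (d N e : ℕ) (hd : 2 ≤ d) (hN : 1 < N) :
    |∑ k ∈ N.properDivisors, (ArithmeticFunction.moebius (N / k)) * (d : ℤ) ^ (e * k)|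
      ≤ (N / 2 : ℕ) * (d : ℤ) ^ (e * (N / 2)) := by
  have step2 : ∀ k ∈ N.properDivisors,
      |(ArithmeticFunction.moebius (N / k)) * (d : ℤ) ^ (e * k)| ≤ (d : ℤ) ^ (e * (N / 2)) := by
    intro k hk
    rw [Nat.mem_properDivisors] at hk
    have hkle : k ≤ N / 2 := aux_le_half N k hk.1 hk.2
    rw [abs_mul, abs_of_nonneg (by positivity : (0:ℤ) ≤ (d:ℤ) ^ (e * k))]
    calc |(ArithmeticFunction.moebius (N / k) : ℤ)| * (d : ℤ) ^ (e * k)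
        ≤ 1 * (d : ℤ) ^ (e * k) :=
          mul_le_mul_of_nonneg_right ArithmeticFunction.abs_moebius_le_one (by positivity)
      _ = (d : ℤ) ^ (e * k) := one_mul _
      _ ≤ (d : ℤ) ^ (e * (N / 2)) := by
          apply pow_le_pow_right₀ (by exact_mod_cast Nat.one_le_of_lt hd)
          exact Nat.mul_le_mul_left e hkle
  calc |∑ k ∈ N.properDivisors, (ArithmeticFunction.moebius (N / k)) * (d : ℤ) ^ (e * k)|
      ≤ ∑ k ∈ N.properDivisors, |(ArithmeticFunction.moebius (N / k)) * (d : ℤ) ^ (e * k)| :=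
        Finset.abs_sum_le_sum_abs _ _
    _ ≤ ∑ _k ∈ N.properDivisors, (d : ℤ) ^ (e * (N / 2)) := Finset.sum_le_sum step2
    _ = (N.properDivisors.card : ℤ) * (d : ℤ) ^ (e * (N / 2)) := by
        rw [Finset.sum_const, nsmul_eq_mul]
    _ ≤ (N / 2 : ℕ) * (d : ℤ) ^ (e * (N / 2)) := by
        apply mul_le_mul_of_nonneg_right _ (by positivity)
        exact_mod_cast aux_card_le N hN

private lemma aux_self_le_pow (d m : ℕ) (hd : 2 ≤ d) (hm : 1 ≤ m) : m ≤ d ^ (m - 1) := by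
  have h1 : m - 1 < 2 ^ (m - 1) := Nat.lt_two_pow_self
  have h2 : 2 ^ (m - 1) ≤ d ^ (m - 1) := Nat.pow_le_pow_left hd _
  omega

-- pure arithmetic core, in ℕ
private lemma aux_arith (d p N : ℕ) (hd : 2 ≤ d) (hp2 : 2 ≤ p) (hN : 1 < N)
    (hkey : p + N + 1 ≤ p * N) :
    p * (d ^ N + (N / 2) * d ^ (N / 2)) + (N / 2) * d ^ (p * (N / 2)) < d ^ (p * N) := by
  set m := N / 2 with hm
  have hm1 : 1 ≤ m := by omega
  have h2m : 2 * m ≤ N := by omega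
  have hd1 : 1 ≤ d := by omega
  have hpN6 : 6 ≤ p * N := by nlinarith
  have hple : p ≤ d ^ (p - 1) := aux_self_le_pow d p hd (by omega)
  have hmle : m ≤ d ^ (m - 1) := aux_self_le_pow d m hd hm1
  -- three bounds
  have h1 : p * d ^ N ≤ d ^ (p * N - 2) := by
    calc p * d ^ N ≤ d ^ (p - 1) * d ^ N := Nat.mul_le_mul_right _ hple
      _ = d ^ (p - 1 + N) := (pow_add d _ _).symm
      _ ≤ d ^ (p * N - 2) := Nat.pow_le_pow_right hd1 (by omega)
  have h2 : p * (m * d ^ m) ≤ d ^ (p * N - 3) := by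
    calc p * (m * d ^ m) ≤ d ^ (p - 1) * (d ^ (m - 1) * d ^ m) := by
          exact Nat.mul_le_mul hple (Nat.mul_le_mul_right _ hmle)
      _ = d ^ (p - 1 + (m - 1 + m)) := by rw [← pow_add, ← pow_add]
      _ ≤ d ^ (p * N - 3) := Nat.pow_le_pow_right hd1 (by omega)
  have h3 : m * d ^ (p * m) ≤ d ^ (p * N - 1) := by
    have hpm : p * m + (m - 1) ≤ p * N - 1 := by
      have t1 : p * (2 * m) ≤ p * N := Nat.mul_le_mul_left p h2m
      have t3 : m ≤ p * m := Nat.le_mul_of_pos_left m (by omega)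
      have hx : p * m + m ≤ p * N := by nlinarith [t1, t3]
      omega
    calc m * d ^ (p * m) ≤ d ^ (m - 1) * d ^ (p * m) := Nat.mul_le_mul_right _ hmle
      _ = d ^ (p * m + (m - 1)) := by rw [← pow_add]; ring_nf
      _ ≤ d ^ (p * N - 1) := Nat.pow_le_pow_right hd1 hpm
  -- final
  have hfin : d ^ (p * N - 1) + d ^ (p * N - 2) + d ^ (p * N - 3) < d ^ (p * N) := by
    obtain ⟨b, hb⟩ : ∃ b, p * N = b + 3 := ⟨p * N - 3, by omega⟩
    rw [hb]
    have hx : 1 ≤ d ^ b := Nat.one_le_pow _ _ (by omega)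
    have e1 : d ^ (b + 3) = d ^ b * d * d * d := by ring
    have e2 : d ^ (b + 3 - 1) = d ^ b * d * d := by rw [show b + 3 - 1 = b + 2 from rfl]; ring
    have e3 : d ^ (b + 3 - 2) = d ^ b * d := by rw [show b + 3 - 2 = b + 1 from rfl]; ring
    have e4 : d ^ (b + 3 - 3) = d ^ b := by rw [show b + 3 - 3 = b from rfl]
    rw [e1, e2, e3, e4]
    have c1 : d ^ b * d * d * 2 ≤ d ^ b * d * d * d := Nat.mul_le_mul_left _ hd
    have c2 : d ^ b * d * 2 ≤ d ^ b * d * d := Nat.mul_le_mul_left _ hd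
    have c3 : d ^ b * 2 ≤ d ^ b * d := Nat.mul_le_mul_left _ hd
    linarith
  calc p * (d ^ N + m * d ^ m) + m * d ^ (p * m)
      = p * d ^ N + p * (m * d ^ m) + m * d ^ (p * m) := by ring
    _ ≤ d ^ (p * N - 2) + d ^ (p * N - 3) + d ^ (p * N - 1) := by
        exact Nat.add_le_add (Nat.add_le_add h1 h2) h3
    _ < d ^ (p * N) := by omega

/-- Degree inequality `deg Φ*_{pN} > deg Ψ*_{pN}` for `p ∤ N`, `N > 1`:
`∑_{k∣N} μ(N/k)·d^{pk} − ∑_{k∣N} μ(N/k)·d^k > (p−1)·∑_{k∣N} μ(N/k)·d^k`. -/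
theorem deg_dynatomic_gt_deg_tuned (d p N : ℕ) (hd : 2 ≤ d) (hp : p.Prime)
    (hN : 1 < N) (hpN : ¬ p ∣ N) :
    ((p : ℤ) - 1) * ∑ k ∈ N.divisors, (ArithmeticFunction.moebius (N / k)) * (d : ℤ) ^ k <
      (∑ k ∈ N.divisors, (ArithmeticFunction.moebius (N / k)) * (d : ℤ) ^ (p * k)) -
        ∑ k ∈ N.divisors, (ArithmeticFunction.moebius (N / k)) * (d : ℤ) ^ k := by
  have hN0 : N ≠ 0 := by omega
  have hp2 : 2 ≤ p := hp.two_le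
  set m := N / 2 with hm
  -- split off top term
  have hsplit : ∀ f : ℕ → ℤ, ∑ k ∈ N.divisors, f k = f N + ∑ k ∈ N.properDivisors, f k := by
    intro f
    rw [← Nat.cons_self_properDivisors hN0, Finset.sum_cons]
  have hmu1 : (ArithmeticFunction.moebius (N / N) : ℤ) = 1 := by
    rw [Nat.div_self (by omega : 0 < N)]; simp
  -- bounds on the two sums
  have hA := aux_sum_bound d N p hd hN
  have hB := aux_sum_bound d N 1 hd hN
  set SA := ∑ k ∈ N.properDivisors, (ArithmeticFunction.moebius (N / k)) * (d : ℤ) ^ (p * k)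
    with hSA
  set SB := ∑ k ∈ N.properDivisors, (ArithmeticFunction.moebius (N / k)) * (d : ℤ) ^ (1 * k)
    with hSB
  have hAeq : (∑ k ∈ N.divisors, (ArithmeticFunction.moebius (N / k)) * (d : ℤ) ^ (p * k))
      = (d : ℤ) ^ (p * N) + SA := by
    rw [hsplit fun k => (ArithmeticFunction.moebius (N / k)) * (d : ℤ) ^ (p * k), hmu1, one_mul]
  have hBeq : (∑ k ∈ N.divisors, (ArithmeticFunction.moebius (N / k)) * (d : ℤ) ^ k)
      = (d : ℤ) ^ N + SB := by
    rw [hsplit fun k => (ArithmeticFunction.moebius (N / k)) * (d : ℤ) ^ k, hmu1, one_mul, hSB]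
    simp [one_mul]
  rw [hAeq, hBeq]
  -- key arithmetic inequality
  have hkeyN : p + N + 1 ≤ p * N := by
    rcases Nat.lt_or_ge p 3 with h | h
    · have hp2' : p = 2 := by omega
      subst hp2'
      have hN3 : 3 ≤ N := by
        rcases Nat.even_or_odd N with he | ho
        · exact absurd he.two_dvd hpN
        · rw [Nat.odd_iff] at ho; omega
      omega
    · obtain ⟨a, rfl⟩ : ∃ a, p = a + 3 := ⟨p - 3, by omega⟩
      obtain ⟨b, rfl⟩ : ∃ b, N = b + 2 := ⟨N - 2, by omega⟩
      nlinarith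
  have harith := aux_arith d p N hd hp2 hN hkeyN
  have harithZ : (p : ℤ) * ((d:ℤ) ^ N + ((m:ℕ):ℤ) * (d:ℤ) ^ (m:ℕ)) + ((m:ℕ):ℤ) * (d:ℤ) ^ (p * m)
      < (d:ℤ) ^ (p * N) := by exact_mod_cast harith
  have hA' : -(((m:ℕ):ℤ) * (d:ℤ) ^ (p * m)) ≤ SA := (abs_le.mp hA).1
  have hB' : SB ≤ ((m:ℕ):ℤ) * (d:ℤ) ^ (1 * m) := (abs_le.mp hB).2
  rw [one_mul] at hB'
  have hp0 : (0:ℤ) ≤ (p:ℤ) := by positivity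
  nlinarith [hA', hB', harithZ, mul_le_mul_of_nonneg_left hB' hp0]
end

section
/- Define h: ℕ → ℤ by h = (f − g) * μ (Dirichlet convolution), where f(n) = a^{pn} and g(n) = p·a^n with integers a ≥ 2, p ≥ 2. Then h(1) = a^p − pa ≥ 0, and h(n) > 0 and h(n) < a^{pn} for all n > 1. -/
open scoped BigOperators
open Finset ArithmeticFunction

private lemma moebius_abs_le (x : ℕ) : |(ArithmeticFunction.moebius x : ℤ)| ≤ 1 := by
  by_cases hx : Squarefree x
  · rw [ArithmeticFunction.moebius_apply_of_squarefree hx, abs_pow, abs_neg, abs_one, one_pow]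
  · rw [ArithmeticFunction.moebius_eq_zero_of_not_squarefree hx]; norm_num

private lemma nat_add_le_mul {p m : ℕ} (hp : 2 ≤ p) (hm : 2 ≤ m) : p + m ≤ p * m := by
  rcases le_total p m with hle | hle
  · calc p + m ≤ 2 * m := by omega
      _ ≤ p * m := Nat.mul_le_mul_right m hp
  · calc p + m ≤ p * 2 := by omega
      _ ≤ p * m := Nat.mul_le_mul_left p hm

private lemma cast_p_le (a : ℤ) (p : ℕ) (ha : 2 ≤ a) (hp : 1 ≤ p) : (p : ℤ) ≤ a ^ (p - 1) := by
  have h1 : p ≤ 2 ^ (p - 1) := by have := @Nat.lt_two_pow_self (p - 1); omega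
  calc (p : ℤ) ≤ (2 : ℤ) ^ (p - 1) := by exact_mod_cast h1
    _ ≤ a ^ (p - 1) := pow_le_pow_left₀ (by norm_num) ha _

/-- `p·a^k ≤ a^{pk}` for `k ≥ 1`. -/
private lemma term_nonneg (a : ℤ) (p k : ℕ) (ha : 2 ≤ a) (hp : 2 ≤ p) (hk : 1 ≤ k) :
    (p : ℤ) * a ^ k ≤ a ^ (p * k) := by
  have ha1 : (1 : ℤ) ≤ a := by linarith
  obtain ⟨k', rfl⟩ := Nat.exists_eq_add_of_le hk
  have hexp : (p - 1) + (1 + k') ≤ p * (1 + k') := by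
    have h1 : k' ≤ p * k' := Nat.le_mul_of_pos_left k' (by omega)
    have h2 : p * (1 + k') = p + p * k' := by ring
    omega
  calc (p : ℤ) * a ^ (1 + k') ≤ a ^ (p - 1) * a ^ (1 + k') := by
        have := cast_p_le a p ha (by omega)
        exact mul_le_mul_of_nonneg_right this (by positivity)
    _ = a ^ ((p - 1) + (1 + k')) := (pow_add a _ _).symm
    _ ≤ a ^ (p * (1 + k')) := pow_le_pow_right₀ ha1 hexp

/-- key inequality: `p·a^m + 2·a^{p(m-1)} ≤ a^{pm}` for `m ≥ 2`. -/
private lemma keyK (a : ℤ) (p m : ℕ) (ha : 2 ≤ a) (hp : 2 ≤ p) (hm : 2 ≤ m) :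
    (p : ℤ) * a ^ m + 2 * a ^ (p * (m - 1)) ≤ a ^ (p * m) := by
  have ha0 : (0 : ℤ) < a := by linarith
  have ha1 : (1 : ℤ) ≤ a := by linarith
  have hA : a * ((p : ℤ) * a ^ m) ≤ a ^ (p * m) := by
    calc a * ((p : ℤ) * a ^ m) = (p : ℤ) * a ^ (m + 1) := by ring
      _ ≤ a ^ (p - 1) * a ^ (m + 1) :=
          mul_le_mul_of_nonneg_right (cast_p_le a p ha (by omega)) (by positivity)
      _ = a ^ ((p - 1) + (m + 1)) := (pow_add a _ _).symm
      _ ≤ a ^ (p * m) := pow_le_pow_right₀ ha1 (by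
          have := nat_add_le_mul hp hm; omega)
  have hB : a * (2 * a ^ (p * (m - 1))) ≤ a ^ (p * m) := by
    calc a * (2 * a ^ (p * (m - 1))) = 2 * a ^ (p * (m - 1) + 1) := by ring
      _ ≤ a * a ^ (p * (m - 1) + 1) := mul_le_mul_of_nonneg_right (by linarith) (by positivity)
      _ = a ^ (p * (m - 1) + 2) := by rw [← pow_succ']
      _ ≤ a ^ (p * m) := pow_le_pow_right₀ ha1 (by
          obtain ⟨m', rfl⟩ := Nat.exists_eq_add_of_le hm
          have e0 : p * (2 + m') = p * (1 + m') + p := by ring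
          have e1 : p * (2 + m' - 1) = p * (1 + m') := by congr 1; omega
          omega)
  have h2 : a * ((p : ℤ) * a ^ m + 2 * a ^ (p * (m - 1))) ≤ a * a ^ (p * m) := by
    have hpow : (2 : ℤ) * a ^ (p * m) ≤ a * a ^ (p * m) :=
      mul_le_mul_of_nonneg_right (by linarith) (by positivity)
    calc a * ((p : ℤ) * a ^ m + 2 * a ^ (p * (m - 1)))
        = a * ((p : ℤ) * a ^ m) + a * (2 * a ^ (p * (m - 1))) := by ring
      _ ≤ a ^ (p * m) + a ^ (p * m) := add_le_add hA hB
      _ = 2 * a ^ (p * m) := by ring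
      _ ≤ a * a ^ (p * m) := hpow
  exact le_of_mul_le_mul_left h2 ha0

/-- geometric-type bound. -/
private lemma geo (a : ℤ) (p : ℕ) (ha : 2 ≤ a) (hp : 2 ≤ p) (m : ℕ) :
    ∑ k ∈ Finset.Icc 1 m, a ^ (p * k) < 2 * a ^ (p * m) := by
  have ha0 : (0 : ℤ) < a := by linarith
  induction m with
  | zero => simp
  | succ m ih =>
      rw [Finset.sum_Icc_succ_top (by omega)]
      have hap : (2 : ℤ) ≤ a ^ p := by
        calc (2 : ℤ) = 2 ^ 1 := by norm_num
          _ ≤ 2 ^ p := pow_le_pow_right₀ (by norm_num) (by omega)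
          _ ≤ a ^ p := pow_le_pow_left₀ (by norm_num) ha _
      have key : 2 * a ^ (p * m) ≤ a ^ (p * (m + 1)) := by
        have : a ^ (p * (m + 1)) = a ^ (p * m) * a ^ p := by rw [← pow_add]; ring_nf
        rw [this]
        calc 2 * a ^ (p * m) = a ^ (p * m) * 2 := by ring
          _ ≤ a ^ (p * m) * a ^ p := mul_le_mul_of_nonneg_left hap (by positivity)
      have hpos : (0:ℤ) < a ^ (p * (m+1)) := by positivity
      linarith

/-- bound on a partial moebius-weighted sum. -/
private lemma sum_bound (a : ℤ) (p n M : ℕ) (ha : 2 ≤ a) (hp : 2 ≤ p)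
    (U : Finset ℕ) (hU : U ⊆ Finset.Icc 1 M) :
    |∑ k ∈ U, (a ^ (p * k) - (p : ℤ) * a ^ k) * (ArithmeticFunction.moebius (n / k))|
      < 2 * a ^ (p * M) := by
  have ha0 : (0 : ℤ) < a := by linarith
  calc |∑ k ∈ U, (a ^ (p * k) - (p : ℤ) * a ^ k) * (ArithmeticFunction.moebius (n / k))|
      ≤ ∑ k ∈ U, |(a ^ (p * k) - (p : ℤ) * a ^ k) * (ArithmeticFunction.moebius (n / k))| :=
        Finset.abs_sum_le_sum_abs _ _
    _ ≤ ∑ k ∈ U, a ^ (p * k) := by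
        refine Finset.sum_le_sum (fun k hk => ?_)
        have hk1 : 1 ≤ k := (Finset.mem_Icc.mp (hU hk)).1
        have ht0 : (0:ℤ) ≤ a ^ (p * k) - (p : ℤ) * a ^ k :=
          sub_nonneg.mpr (term_nonneg a p k ha hp hk1)
        have ht1 : a ^ (p * k) - (p : ℤ) * a ^ k ≤ a ^ (p * k) := by
          have : (0:ℤ) ≤ (p : ℤ) * a ^ k := by positivity
          linarith
        rw [abs_mul]
        calc |a ^ (p * k) - (p : ℤ) * a ^ k| * |(ArithmeticFunction.moebius (n / k) : ℤ)|
            ≤ |a ^ (p * k) - (p : ℤ) * a ^ k| * 1 :=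
              mul_le_mul_of_nonneg_left (moebius_abs_le _) (abs_nonneg _)
          _ = |a ^ (p * k) - (p : ℤ) * a ^ k| := mul_one _
          _ ≤ a ^ (p * k) := by rw [abs_of_nonneg ht0]; exact ht1
    _ ≤ ∑ k ∈ Finset.Icc 1 M, a ^ (p * k) :=
        Finset.sum_le_sum_of_subset_of_nonneg hU (fun k _ _ => by positivity)
    _ < 2 * a ^ (p * M) := geo a p ha hp M

/-- Let `h = (f − g) * μ` (Dirichlet convolution) where `f(n) = a^{pn}`, `g(n) = p·a^n`,
with `a ≥ 2`, `p ≥ 2`.  Then `h(1) = a^p − pa ≥ 0`, and `0 < h(n) < a^{pn}` for all `n > 1`. -/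
theorem conv_h_pos (a : ℤ) (p : ℕ) (ha : 2 ≤ a) (hp : 2 ≤ p)
    (h : ℕ → ℤ)
    (hdef : ∀ n, h n = ∑ k ∈ n.divisors,
      (a ^ (p * k) - (p : ℤ) * a ^ k) * (ArithmeticFunction.moebius (n / k))) :
    h 1 = a ^ p - (p : ℤ) * a ∧ 0 ≤ h 1 ∧ ∀ n, 1 < n → 0 < h n ∧ h n < a ^ (p * n) := by
  have ha0 : (0 : ℤ) < a := by linarith
  have ha1 : (1 : ℤ) ≤ a := by linarith
  have h1eq : h 1 = a ^ p - (p : ℤ) * a := by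
    rw [hdef]; simp [Nat.divisors_one]
  refine ⟨h1eq, ?_, ?_⟩
  · rw [h1eq]
    have := term_nonneg a p 1 ha hp le_rfl
    simpa using sub_nonneg.mpr this
  intro n hn
  have hn0 : n ≠ 0 := by omega
  set f : ℕ → ℤ := fun k => (a ^ (p * k) - (p : ℤ) * a ^ k) * (ArithmeticFunction.moebius (n / k))
    with hf
  set T : Finset ℕ := n.divisors.erase n with hT
  have hsplit : h n = (a ^ (p * n) - (p : ℤ) * a ^ n) + ∑ k ∈ T, f k := by
    rw [hdef, ← Finset.add_sum_erase _ f (Nat.mem_divisors_self n hn0)]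
    simp [hf, hT, Nat.div_self (show 0 < n by omega)]
  -- T ⊆ Icc 1 (n/2)
  have hTsub : T ⊆ Finset.Icc 1 (n / 2) := by
    intro k hk
    obtain ⟨hkne, hkd⟩ := Finset.mem_erase.mp hk
    have hk1 : 1 ≤ k := Nat.pos_of_mem_divisors hkd
    obtain ⟨hdvd, -⟩ := Nat.mem_divisors.mp hkd
    obtain ⟨c, rfl⟩ := hdvd
    have hc : 2 ≤ c := by
      rcases Nat.lt_or_ge c 2 with hc | hc
      · interval_cases c <;> simp_all
      · exact hc
    refine Finset.mem_Icc.mpr ⟨hk1, ?_⟩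
    exact (Nat.le_div_iff_mul_le (by norm_num)).mpr (Nat.mul_le_mul_left k hc)
  constructor
  · -- lower bound
    have hS : |∑ k ∈ T, f k| < 2 * a ^ (p * (n / 2)) := sum_bound a p n (n / 2) ha hp T hTsub
    have hmono : 2 * a ^ (p * (n / 2)) ≤ 2 * a ^ (p * (n - 1)) := by
      have : p * (n / 2) ≤ p * (n - 1) := Nat.mul_le_mul_left p (by omega)
      have := pow_le_pow_right₀ ha1 this
      linarith
    have hK := keyK a p n ha hp (by omega)
    have habs : -|∑ k ∈ T, f k| ≤ ∑ k ∈ T, f k := neg_abs_le _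
    rw [hsplit]
    linarith
  · -- upper bound
    have hqp : (n.minFac).Prime := Nat.minFac_prime (by omega)
    set m : ℕ := n / n.minFac with hmdef
    have hmdvd : m ∣ n := Nat.div_dvd_of_dvd n.minFac_dvd
    have hmlt : m < n := Nat.div_lt_self (by omega) hqp.one_lt
    have hm1 : 1 ≤ m := Nat.div_pos (Nat.minFac_le (by omega)) hqp.pos
    have hmem : m ∈ T :=
      Finset.mem_erase.mpr ⟨Nat.ne_of_lt hmlt, Nat.mem_divisors.mpr ⟨hmdvd, hn0⟩⟩
    have hnm : n / m = n.minFac := Nat.div_div_self n.minFac_dvd hn0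
    have hμ : (ArithmeticFunction.moebius (n / m) : ℤ) = -1 := by
      rw [hnm]; exact ArithmeticFunction.moebius_apply_prime hqp
    have hsplit2 : ∑ k ∈ T, f k = f m + ∑ k ∈ T.erase m, f k :=
      (Finset.add_sum_erase _ f hmem).symm
    have hfm : f m = -(a ^ (p * m) - (p : ℤ) * a ^ m) := by
      rw [hf]; simp only [hμ]; ring
    -- T.erase m ⊆ Icc 1 (m - 1)
    have hTm : T.erase m ⊆ Finset.Icc 1 (m - 1) := by
      intro k hk
      obtain ⟨hknem, hkT⟩ := Finset.mem_erase.mp hk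
      obtain ⟨hkne, hkd⟩ := Finset.mem_erase.mp hkT
      have hk1 : 1 ≤ k := Nat.pos_of_mem_divisors hkd
      obtain ⟨hdvd, -⟩ := Nat.mem_divisors.mp hkd
      have hkm : k ≤ m := by
        have h2 : n.minFac ≤ n / k := by
          refine Nat.minFac_le_of_dvd ?_ (Nat.div_dvd_of_dvd hdvd)
          have hklt : k < n := lt_of_le_of_ne (Nat.le_of_dvd (by omega) hdvd) hkne
          obtain ⟨c, rfl⟩ := hdvd
          have hc : 2 ≤ c := by
            rcases Nat.lt_or_ge c 2 with hc | hc
            · interval_cases c <;> simp_all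
            · exact hc
          rw [Nat.mul_div_cancel_left c (by omega)]
          exact hc
        have hle : n / (n / k) ≤ n / n.minFac := Nat.div_le_div_left h2 hqp.pos
        rwa [Nat.div_div_self hdvd hn0] at hle
      exact Finset.mem_Icc.mpr ⟨hk1, by omega⟩
    have hS' : ∑ k ∈ T.erase m, f k ≤ a ^ (p * m) - (p : ℤ) * a ^ m := by
      rcases eq_or_lt_of_le hm1 with hm1' | hm2
      · -- m = 1 : the erased set is empty
        have hempty : T.erase m ⊆ (∅ : Finset ℕ) := by
          intro k hk
          have := Finset.mem_Icc.mp (hTm hk)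
          omega
        rw [Finset.subset_empty.mp hempty, Finset.sum_empty]
        have := term_nonneg a p m ha hp hm1
        linarith
      · have hS := sum_bound a p n (m - 1) ha hp (T.erase m) hTm
        have hK := keyK a p m ha hp (by omega)
        have := le_abs_self (∑ k ∈ T.erase m, f k)
        linarith
    rw [hsplit, hsplit2, hfm]
    have hpan : (0:ℤ) < (p : ℤ) * a ^ n := by positivity
    linarith
end
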